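/- arXiv:math/0510064 — 12 statements merged into one kernel-verified Lean document; each statement's English description precedes it below -/
import Mathlib

section
/- Let p be a finitely additive probability measure on a set algebra 𝔄 on X and let m_p be the induced mean. Then the p-completion of 𝔄 equals the set algebra {A ⊆ X : 𝟙_A ∈ I_p}, where I_p is the m_p-closure of the 𝔄-simple functions. In particular 𝔄 equals {A : 𝟙_A ∈ I_p} if and only if 𝔄 is p-closed. -/
/-!
`A₁ ⊆ A ⊆ A₂` with `A₁, A₂ ∈ 𝔄` and small `p (A₂ \ A₁)` turn into the simple functions
`𝟙_{A₁} ≤ 𝟙_A ≤ 𝟙_{A₂}` with means `p A₁`, `p A₂`. Conversely, simple `f₁ ≤ 𝟙_A ≤ f₂` have level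
sets `A₁ = {f₁ ≥ 1/2} ⊆ A ⊆ A₂ = {f₂ ≥ 1/2}` in `𝔄`, and `𝟙_{A₂ \ A₁} ≤ 2 (f₂ - f₁)`, so
`p (A₂ \ A₁) ≤ 2 (m_p f₂ - m_p f₁)` by monotonicity of the mean. That monotonicity (a nonnegative
simple function has nonnegative mean, whatever its representation) is where positivity and
additivity of `p` enter.
-/

open Set

namespace Stmt2

/-- A Boolean set algebra on `X`. -/
def IsSetAlgebra' {X : Type*} (A : Set (Set X)) : Prop :=
  ∅ ∈ A ∧ Set.univ ∈ A ∧ (∀ s ∈ A, ∀ t ∈ A, s ∪ t ∈ A) ∧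
    (∀ s ∈ A, ∀ t ∈ A, s ∩ t ∈ A) ∧ (∀ s ∈ A, sᶜ ∈ A)

/-- An `𝔄`-simple real valued function together with the value of the induced mean `m_p`:
`SimpleWithMean 𝔄 p f v` holds if `f = ∑ cᵢ 𝟙_{Aᵢ}` with `Aᵢ ∈ 𝔄` and `v = ∑ cᵢ p(Aᵢ)`. -/
def SimpleWithMean {X : Type*} (𝔄 : Set (Set X)) (p : Set X → ℝ) (f : X → ℝ) (v : ℝ) : Prop :=
  ∃ (n : ℕ) (c : Fin n → ℝ) (s : Fin n → Set X),
    (∀ i, s i ∈ 𝔄) ∧ (f = fun x => ∑ i, c i * (s i).indicator 1 x) ∧ v = ∑ i, c i * p (s i)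

/-- `f` belongs to `I_p`, the `m_p`-closure of the `𝔄`-simple functions: for every `ε > 0`
there are `𝔄`-simple `f₁ ≤ f ≤ f₂` with `m_p (f₂ - f₁) < ε`. -/
def MemIp {X : Type*} (𝔄 : Set (Set X)) (p : Set X → ℝ) (f : X → ℝ) : Prop :=
  ∀ ε > (0 : ℝ), ∃ (f₁ f₂ : X → ℝ) (v₁ v₂ : ℝ),
    SimpleWithMean 𝔄 p f₁ v₁ ∧ SimpleWithMean 𝔄 p f₂ v₂ ∧
    (∀ x, f₁ x ≤ f x) ∧ (∀ x, f x ≤ f₂ x) ∧ v₂ - v₁ < ε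

/-- The `p`-completion of `𝔄`. -/
def PCompletion {X : Type*} (𝔄 : Set (Set X)) (p : Set X → ℝ) : Set (Set X) :=
  {A | ∀ ε > (0 : ℝ), ∃ A₁ ∈ 𝔄, ∃ A₂ ∈ 𝔄, A₁ ⊆ A ∧ A ⊆ A₂ ∧ p (A₂ \ A₁) < ε}

open MeasureTheory

section

variable {X : Type*} {𝔄 : Set (Set X)} {p : Set X → ℝ}

theorem IsSetAlgebra'.isSetAlgebra (h : IsSetAlgebra' 𝔄) : IsSetAlgebra 𝔄 where
  empty_mem := h.1
  compl_mem := h.2.2.2.2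
  union_mem _ _ hs ht := h.2.2.1 _ hs _ ht

def IsAdditiveOn (𝔄 : Set (Set X)) (p : Set X → ℝ) : Prop :=
  ∀ A ∈ 𝔄, ∀ B ∈ 𝔄, A ∩ B = ∅ → p (A ∪ B) = p A + p B

namespace IsAdditiveOn

theorem empty (h𝔄 : IsSetAlgebra 𝔄) (hp : IsAdditiveOn 𝔄 p) : p ∅ = 0 := by
  have := hp ∅ h𝔄.empty_mem ∅ h𝔄.empty_mem (inter_self ∅)
  rw [union_self] at this
  linarith

theorem inter_add_sdiff (h𝔄 : IsSetAlgebra 𝔄) (hp : IsAdditiveOn 𝔄 p) {E S : Set X}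
    (hE : E ∈ 𝔄) (hS : S ∈ 𝔄) : p (E ∩ S) + p (E \ S) = p E := by
  rw [← hp _ (h𝔄.inter_mem hE hS) _ (h𝔄.sdiff_mem hE hS) (by ext; simp +contextual),
    inter_union_sdiff]

end IsAdditiveOn

namespace SimpleWithMean

theorem indicator {B : Set X} (hB : B ∈ 𝔄) : SimpleWithMean 𝔄 p (B.indicator 1) (p B) :=
  ⟨1, fun _ => 1, fun _ => B, fun _ => hB, by simp, by simp⟩

theorem const_mul {f : X → ℝ} {v : ℝ} (hf : SimpleWithMean 𝔄 p f v) (a : ℝ) :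
    SimpleWithMean 𝔄 p (fun x => a * f x) (a * v) := by
  obtain ⟨n, c, s, hs, rfl, rfl⟩ := hf
  refine ⟨n, fun i => a * c i, s, hs, ?_, ?_⟩ <;> simp only [Finset.mul_sum, mul_assoc]

theorem sub {f g : X → ℝ} {v w : ℝ} (hf : SimpleWithMean 𝔄 p f v)
    (hg : SimpleWithMean 𝔄 p g w) : SimpleWithMean 𝔄 p (fun x => g x - f x) (w - v) := by
  obtain ⟨n, c, s, hs, rfl, rfl⟩ := hf
  obtain ⟨m, d, t, ht, rfl, rfl⟩ := hg
  refine ⟨m + n, Fin.append d (fun i => -c i), Fin.append t s,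
    Fin.addCases (by simpa using ht) (by simpa using hs), ?_, ?_⟩
  · funext x
    simp [Fin.sum_univ_add, sub_eq_add_neg]
  · simp [Fin.sum_univ_add, sub_eq_add_neg]

end SimpleWithMean

theorem setOf_le_sum_mul_indicator_mem (h𝔄 : IsSetAlgebra 𝔄) {n : ℕ} (c : Fin n → ℝ)
    {s : Fin n → Set X} (hs : ∀ i, s i ∈ 𝔄) (r : ℝ) :
    {x | r ≤ ∑ i, c i * (s i).indicator 1 x} ∈ 𝔄 := by
  induction n generalizing r with
  | zero =>
    by_cases hr : r ≤ 0
    · simpa [hr] using h𝔄.univ_mem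
    · simpa [hr] using h𝔄.empty_mem
  | succ n ih =>
    set S := s (Fin.last n)
    set b := c (Fin.last n)
    have hsplit : {x | r ≤ ∑ i, c i * (s i).indicator 1 x} =
        (S ∩ {x | r - b ≤ ∑ i : Fin n, c i.castSucc * (s i.castSucc).indicator 1 x}) ∪
          (Sᶜ ∩ {x | r ≤ ∑ i : Fin n, c i.castSucc * (s i.castSucc).indicator 1 x}) := by
      ext x
      by_cases hx : x ∈ S <;> simp [Fin.sum_univ_castSucc, S, b, hx]
    rw [hsplit]
    exact h𝔄.union_mem (h𝔄.inter_mem (hs _) (ih _ (fun i => hs _) _))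
      (h𝔄.inter_mem (h𝔄.compl_mem (hs _)) (ih _ (fun i => hs _) _))

theorem SimpleWithMean.setOf_le_mem (h𝔄 : IsSetAlgebra 𝔄) {f : X → ℝ} {v : ℝ}
    (hf : SimpleWithMean 𝔄 p f v) (r : ℝ) : {x | r ≤ f x} ∈ 𝔄 := by
  obtain ⟨n, c, s, hs, rfl, -⟩ := hf
  exact setOf_le_sum_mul_indicator_mem h𝔄 c hs r

-- The constant `a` and the restriction to `B` let the induction on the number of terms go
-- through: splitting `B` along the last set absorbs that set's term into the constant.
theorem mul_add_sum_mul_inter_nonneg (h𝔄 : IsSetAlgebra 𝔄) (hp0 : ∀ A ∈ 𝔄, 0 ≤ p A)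
    (hp : IsAdditiveOn 𝔄 p) {n : ℕ} (c : Fin n → ℝ) {s : Fin n → Set X} (hs : ∀ i, s i ∈ 𝔄)
    (a : ℝ) {B : Set X} (hB : B ∈ 𝔄)
    (hf : ∀ x ∈ B, 0 ≤ a + ∑ i, c i * (s i).indicator 1 x) :
    0 ≤ a * p B + ∑ i, c i * p (s i ∩ B) := by
  induction n generalizing a B with
  | zero =>
    rcases B.eq_empty_or_nonempty with rfl | ⟨x, hx⟩
    · simp [hp.empty h𝔄]
    · simpa using mul_nonneg (by simpa using hf x hx) (hp0 B hB)
  | succ n ih =>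
    have hS : s (Fin.last n) ∈ 𝔄 := hs _
    have hin := ih (c ∘ Fin.castSucc) (fun i => hs i.castSucc) (a + c (Fin.last n))
      (h𝔄.inter_mem hB hS)
      fun x hx => by
        have := hf x hx.1
        simp only [Fin.sum_univ_castSucc, indicator_of_mem hx.2, Pi.one_apply, mul_one] at this
        simp only [Function.comp_apply]
        linarith
    have hout := ih (c ∘ Fin.castSucc) (fun i => hs i.castSucc) a (h𝔄.sdiff_mem hB hS)
      fun x hx => by simpa [Fin.sum_univ_castSucc, hx.2] using hf x hx.1
    have hsplit (i : Fin n) : p (s i.castSucc ∩ B) =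
        p (s i.castSucc ∩ (B ∩ s (Fin.last n))) + p (s i.castSucc ∩ (B \ s (Fin.last n))) := by
      rw [← inter_assoc, ← inter_sdiff_assoc,
        hp.inter_add_sdiff h𝔄 (h𝔄.inter_mem (hs _) hB) hS]
    rw [Fin.sum_univ_castSucc, ← hp.inter_add_sdiff h𝔄 hB hS, inter_comm (s _) B]
    simp only [Function.comp_apply] at hin hout
    simp only [hsplit, mul_add, Finset.sum_add_distrib]
    linarith

theorem SimpleWithMean.nonneg (h𝔄 : IsSetAlgebra 𝔄) (hp0 : ∀ A ∈ 𝔄, 0 ≤ p A)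
    (hp : IsAdditiveOn 𝔄 p) {f : X → ℝ} {v : ℝ} (hf : SimpleWithMean 𝔄 p f v)
    (hf0 : ∀ x, 0 ≤ f x) : 0 ≤ v := by
  obtain ⟨n, c, s, hs, rfl, rfl⟩ := hf
  simpa using mul_add_sum_mul_inter_nonneg h𝔄 hp0 hp c hs 0 h𝔄.univ_mem
    fun x _ => by simpa using hf0 x

theorem SimpleWithMean.mono (h𝔄 : IsSetAlgebra 𝔄) (hp0 : ∀ A ∈ 𝔄, 0 ≤ p A)
    (hp : IsAdditiveOn 𝔄 p) {f g : X → ℝ} {v w : ℝ} (hf : SimpleWithMean 𝔄 p f v)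
    (hg : SimpleWithMean 𝔄 p g w) (hfg : ∀ x, f x ≤ g x) : v ≤ w :=
  sub_nonneg.mp <| (hf.sub hg).nonneg h𝔄 hp0 hp fun x => sub_nonneg.mpr (hfg x)

theorem setOf_half_le_subset {f : X → ℝ} {A : Set X} (hf : ∀ x, f x ≤ A.indicator 1 x) :
    {x | 1 / 2 ≤ f x} ⊆ A := by
  intro x hx
  by_contra hxA
  have := hf x
  simp only [indicator_of_notMem hxA] at this
  exact absurd (hx.out.trans this) (by norm_num)

theorem subset_setOf_half_le {f : X → ℝ} {A : Set X} (hf : ∀ x, A.indicator 1 x ≤ f x) :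
    A ⊆ {x | 1 / 2 ≤ f x} := by
  intro x hxA
  have := hf x
  simp only [indicator_of_mem hxA, Pi.one_apply] at this
  exact (by norm_num : (1 / 2 : ℝ) ≤ 1).trans this

theorem half_mul_indicator_sdiff_le {f₁ f₂ : X → ℝ} {A : Set X}
    (h₁ : ∀ x, f₁ x ≤ A.indicator 1 x) (h₂ : ∀ x, A.indicator 1 x ≤ f₂ x) (x : X) :
    1 / 2 * ({x | 1 / 2 ≤ f₂ x} \ {x | 1 / 2 ≤ f₁ x}).indicator 1 x ≤ f₂ x - f₁ x := by
  have h₁x := h₁ x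
  have h₂x := h₂ x
  by_cases hx : x ∈ {x | 1 / 2 ≤ f₂ x} \ {x | 1 / 2 ≤ f₁ x}
  · obtain ⟨hx₂, hx₁⟩ := hx
    by_cases hxA : x ∈ A <;> simp_all <;> linarith
  · simp only [indicator_of_notMem hx]
    linarith

theorem indicator_memIp_of_mem_pCompletion (h𝔄 : IsSetAlgebra 𝔄) (hp : IsAdditiveOn 𝔄 p)
    {A : Set X} (hA : A ∈ PCompletion 𝔄 p) : MemIp 𝔄 p (A.indicator 1) := by
  intro ε hε
  obtain ⟨A₁, h₁, A₂, h₂, hA₁, hA₂, hlt⟩ := hA ε hε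
  refine ⟨_, _, _, _, .indicator h₁, .indicator h₂,
    indicator_le_indicator_of_subset hA₁ fun _ => zero_le_one,
    indicator_le_indicator_of_subset hA₂ fun _ => zero_le_one, ?_⟩
  have := hp.inter_add_sdiff h𝔄 h₂ h₁
  rw [inter_eq_right.mpr (hA₁.trans hA₂)] at this
  linarith

theorem mem_pCompletion_of_indicator_memIp (h𝔄 : IsSetAlgebra 𝔄) (hp0 : ∀ A ∈ 𝔄, 0 ≤ p A)
    (hp : IsAdditiveOn 𝔄 p) {A : Set X} (hA : MemIp 𝔄 p (A.indicator 1)) :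
    A ∈ PCompletion 𝔄 p := by
  intro ε hε
  obtain ⟨f₁, f₂, v₁, v₂, hf₁, hf₂, hle₁, hle₂, hlt⟩ := hA (ε / 2) (half_pos hε)
  have hA₁ := hf₁.setOf_le_mem h𝔄 (1 / 2)
  have hA₂ := hf₂.setOf_le_mem h𝔄 (1 / 2)
  refine ⟨_, hA₁, _, hA₂, setOf_half_le_subset hle₁, subset_setOf_half_le hle₂, ?_⟩
  have := ((SimpleWithMean.indicator (h𝔄.sdiff_mem hA₂ hA₁)).const_mul (1 / 2)).mono h𝔄 hp0 hp
    (hf₁.sub hf₂) (half_mul_indicator_sdiff_le hle₁ hle₂)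
  linarith

end

theorem pCompletion_eq_indicator_mem_Ip_general {X : Type*} (𝔄 : Set (Set X)) (h𝔄 : IsSetAlgebra' 𝔄)
    (p : Set X → ℝ)
    (hp0 : ∀ A ∈ 𝔄, 0 ≤ p A)
    (hadd : ∀ A ∈ 𝔄, ∀ B ∈ 𝔄, A ∩ B = ∅ → p (A ∪ B) = p A + p B) :
    PCompletion 𝔄 p = {A : Set X | MemIp 𝔄 p (A.indicator 1)} ∧
      (𝔄 = {A : Set X | MemIp 𝔄 p (A.indicator 1)} ↔ PCompletion 𝔄 p = 𝔄) := by
  have h𝔄' := h𝔄.isSetAlgebra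
  have hcompletion : PCompletion 𝔄 p = {A : Set X | MemIp 𝔄 p (A.indicator 1)} :=
    Set.ext fun _ => ⟨indicator_memIp_of_mem_pCompletion h𝔄' hadd,
      mem_pCompletion_of_indicator_memIp h𝔄' hp0 hadd⟩
  exact ⟨hcompletion, hcompletion ▸ eq_comm⟩

/-- Let `p` be a finitely additive probability measure on a set algebra `𝔄` on `X` and `m_p`
the induced mean. Then the `p`-completion of `𝔄` equals `{A ⊆ X : 𝟙_A ∈ I_p}`; in particular
`𝔄 = {A : 𝟙_A ∈ I_p}` iff `𝔄` is `p`-closed (equals its own `p`-completion). -/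
theorem pCompletion_eq_indicator_mem_Ip {X : Type*} (𝔄 : Set (Set X)) (h𝔄 : IsSetAlgebra' 𝔄)
    (p : Set X → ℝ)
    (hp0 : ∀ A ∈ 𝔄, 0 ≤ p A) (hpe : p ∅ = 0) (hpX : p Set.univ = 1)
    (hadd : ∀ A ∈ 𝔄, ∀ B ∈ 𝔄, A ∩ B = ∅ → p (A ∪ B) = p A + p B) :
    PCompletion 𝔄 p = {A : Set X | MemIp 𝔄 p (A.indicator 1)} ∧
      (𝔄 = {A : Set X | MemIp 𝔄 p (A.indicator 1)} ↔ PCompletion 𝔄 p = 𝔄) :=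
  pCompletion_eq_indicator_mem_Ip_general 𝔄 h𝔄 p hp0 hadd

end Stmt2
end

section
/- Let X be a compact Hausdorff space, μ a finite complete regular Borel measure on X, and f : X → ℝ bounded. Then the set of discontinuity points of f is a μ-null set if and only if for every ε > 0 there exist continuous f₁, f₂ : X → ℝ with f₁ ≤ f ≤ f₂ and ∫(f₂ − f₁) dμ < ε. -/
open MeasureTheory Set Filter Topology

/-!
If the discontinuity set `D` of `f` is null, outer regularity puts `D` inside an open set `G` of
small measure. Near a point outside `G`, `f` stays within `δ` of a constant; near a point of `G`, it
stays in `[-C, C]`. Since convex constraints can be glued by a partition of unity, these local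
bounds give continuous `f₁ ≤ f ≤ f₂` with `f₂ - f₁ ≤ 2δ + 2C·𝟙_G`, whose integral is small.

Conversely, where `f₂ x - f₁ x < r` the oscillation of `f` at `x` is below `r`. So the points of
oscillation at least `r` lie in `{r ≤ f₂ - f₁}`, which has measure at most `∫ (f₂ - f₁) / r` by
Markov's inequality. Hence they form a null set, and `D` is a countable union of such sets.
-/

section Sandwich

variable {X : Type*} [TopologicalSpace X]

lemma eventually_abs_sub_lt_of_le_of_le {f f₁ f₂ : X → ℝ} {x : X} {r : ℝ}
    (hf₁ : ContinuousAt f₁ x) (hf₂ : ContinuousAt f₂ x)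
    (h₁ : ∀ y, f₁ y ≤ f y) (h₂ : ∀ y, f y ≤ f₂ y) (hr : f₂ x - f₁ x < r) :
    ∀ᶠ y in 𝓝 x, |f y - f x| < r := by
  have hη : 0 < r - (f₂ x - f₁ x) := sub_pos.2 hr
  filter_upwards [hf₂.eventually_lt_const (lt_add_of_pos_right _ hη),
    hf₁.eventually_const_lt (sub_lt_self _ hη)] with y hy₂ hy₁
  rw [abs_sub_lt_iff]
  constructor <;> linarith [h₁ x, h₂ x, h₁ y, h₂ y]

lemma exists_continuous_sandwich [NormalSpace X] [ParacompactSpace X] {f w : X → ℝ}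
    (H : ∀ x, ∃ a b : ℝ, ∀ᶠ y in 𝓝 x, a ≤ f y ∧ f y ≤ b ∧ b - a ≤ w y) :
    ∃ f₁ f₂ : C(X, ℝ), (∀ x, f₁ x ≤ f x) ∧ (∀ x, f x ≤ f₂ x) ∧ ∀ x, f₂ x - f₁ x ≤ w x := by
  have hconvex : ∀ x, Convex ℝ {p : ℝ × ℝ | p.1 ≤ f x ∧ f x ≤ p.2 ∧ p.2 - p.1 ≤ w x} := by
    rintro x p ⟨hp₁, hp₂, hp₃⟩ q ⟨hq₁, hq₂, hq₃⟩ a b ha hb hab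
    obtain rfl : b = 1 - a := eq_sub_of_add_eq' hab
    simp only [mem_ofPred_eq, Prod.fst_add, Prod.snd_add, Prod.smul_fst, Prod.smul_snd,
      smul_eq_mul]
    refine ⟨?_, ?_, ?_⟩
    · linarith [mul_le_mul_of_nonneg_left hp₁ ha, mul_le_mul_of_nonneg_left hq₁ hb]
    · linarith [mul_le_mul_of_nonneg_left hp₂ ha, mul_le_mul_of_nonneg_left hq₂ hb]
    · linarith [mul_le_mul_of_nonneg_left hp₃ ha, mul_le_mul_of_nonneg_left hq₃ hb]
  obtain ⟨g, hg⟩ := exists_continuous_forall_mem_convex_of_local_const hconvex fun x =>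
    let ⟨a, b, h⟩ := H x; ⟨(a, b), h⟩
  exact ⟨ContinuousMap.fst.comp g, ContinuousMap.snd.comp g,
    fun x => (hg x).1, fun x => (hg x).2.1, fun x => (hg x).2.2⟩

lemma exists_continuous_sandwich_le_add_indicator [NormalSpace X] [ParacompactSpace X]
    {f : X → ℝ} {C δ : ℝ} (hC : ∀ x, |f x| ≤ C) (hδ : 0 < δ) {G : Set X} (hG : IsOpen G)
    (hcont : ∀ x ∉ G, ContinuousAt f x) :
    ∃ f₁ f₂ : C(X, ℝ), (∀ x, f₁ x ≤ f x) ∧ (∀ x, f x ≤ f₂ x) ∧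
      ∀ x, f₂ x - f₁ x ≤ 2 * δ + G.indicator (fun _ => 2 * C) x := by
  refine exists_continuous_sandwich fun x => ?_
  have hC₀ : 0 ≤ C := (abs_nonneg _).trans (hC x)
  by_cases hx : x ∈ G
  · refine ⟨-C, C, eventually_of_mem (hG.mem_nhds hx) fun y hy => ?_⟩
    rw [indicator_of_mem hy]
    exact ⟨(abs_le.1 (hC y)).1, (abs_le.1 (hC y)).2, by linarith⟩
  · refine ⟨f x - δ, f x + δ, ?_⟩
    filter_upwards [Metric.tendsto_nhds.1 (hcont x hx) δ hδ] with y hy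
    rw [Real.dist_eq, abs_sub_lt_iff] at hy
    have : 0 ≤ G.indicator (fun _ => 2 * C) y := indicator_nonneg (fun _ _ => by positivity) y
    exact ⟨by linarith, by linarith, by linarith⟩

end Sandwich

section Measure

variable {X : Type*} [TopologicalSpace X] [CompactSpace X] [MeasurableSpace X]
  [OpensMeasurableSpace X] {μ : Measure X} [IsFiniteMeasure μ]

theorem exists_continuous_sandwich_integral_lt [T2Space X] {f : X → ℝ} {C : ℝ}
    (hC : ∀ x, |f x| ≤ C) (hC₀ : 0 ≤ C)
    (hD : ∀ η > (0 : ℝ), ∃ G, IsOpen G ∧ {x | ¬ ContinuousAt f x} ⊆ G ∧ μ.real G < η)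
    {ε : ℝ} (hε : 0 < ε) :
    ∃ f₁ f₂ : C(X, ℝ), (∀ x, f₁ x ≤ f x) ∧ (∀ x, f x ≤ f₂ x) ∧ ∫ x, (f₂ x - f₁ x) ∂μ < ε := by
  obtain ⟨δ, hδ, hδε⟩ := exists_pos_mul_lt (half_pos hε) (2 * μ.real univ)
  obtain ⟨η, hη, hηε⟩ := exists_pos_mul_lt (half_pos hε) (2 * C)
  obtain ⟨G, hG, hDG, hGη⟩ := hD η hη
  obtain ⟨f₁, f₂, h₁, h₂, hw⟩ := exists_continuous_sandwich_le_add_indicator hC hδ hG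
    fun x hx => not_not.1 fun h => hx (hDG h)
  refine ⟨f₁, f₂, h₁, h₂, ?_⟩
  have hind : Integrable (G.indicator fun _ => 2 * C) μ :=
    (integrable_const _).indicator hG.measurableSet
  calc ∫ x, (f₂ x - f₁ x) ∂μ ≤ ∫ x, (2 * δ + G.indicator (fun _ => 2 * C) x) ∂μ :=
        integral_mono ((f₂.continuous.sub f₁.continuous).integrable_of_hasCompactSupport
          (.of_compactSpace _)) ((integrable_const _).add hind) hw
    _ = 2 * μ.real univ * δ + 2 * C * μ.real G := by
        rw [integral_add (integrable_const _) hind, integral_const,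
          integral_indicator_const _ hG.measurableSet, smul_eq_mul, smul_eq_mul]
        ring
    _ < ε / 2 + ε / 2 :=
        add_lt_add hδε ((mul_le_mul_of_nonneg_left hGη.le (by positivity)).trans_lt hηε)
    _ = ε := add_halves ε

lemma measure_setOf_not_eventually_abs_sub_lt_eq_zero {f : X → ℝ}
    (h : ∀ ε > (0 : ℝ), ∃ f₁ f₂ : C(X, ℝ),
      (∀ x, f₁ x ≤ f x) ∧ (∀ x, f x ≤ f₂ x) ∧ ∫ x, (f₂ x - f₁ x) ∂μ < ε) {r : ℝ} (hr : 0 < r) :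
    μ {x | ¬ ∀ᶠ y in 𝓝 x, |f y - f x| < r} = 0 := by
  set A := {x | ¬ ∀ᶠ y in 𝓝 x, |f y - f x| < r}
  suffices r * μ.real A ≤ 0 from
    (measureReal_eq_zero_iff (measure_ne_top μ A)).1
      (le_antisymm (nonpos_of_mul_nonpos_right this hr) measureReal_nonneg)
  refine le_of_forall_pos_lt_add fun ε hε => ?_
  obtain ⟨f₁, f₂, h₁, h₂, hint⟩ := h ε hε
  have hA : A ⊆ {x | r ≤ f₂ x - f₁ x} := fun x hx => not_lt.1 fun hlt =>
    hx (eventually_abs_sub_lt_of_le_of_le f₁.continuous.continuousAt f₂.continuous.continuousAt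
      h₁ h₂ hlt)
  calc r * μ.real A ≤ r * μ.real {x | r ≤ f₂ x - f₁ x} :=
        mul_le_mul_of_nonneg_left (measureReal_mono hA (measure_ne_top μ _)) hr.le
    _ ≤ ∫ x, (f₂ x - f₁ x) ∂μ :=
        mul_meas_ge_le_integral_of_nonneg (ae_of_all _ fun x => sub_nonneg.2 ((h₁ x).trans (h₂ x)))
          ((f₂.continuous.sub f₁.continuous).integrable_of_hasCompactSupport (.of_compactSpace _)) r
    _ < 0 + ε := by rwa [zero_add]

theorem measure_setOf_not_continuousAt_eq_zero {f : X → ℝ}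
    (h : ∀ ε > (0 : ℝ), ∃ f₁ f₂ : C(X, ℝ),
      (∀ x, f₁ x ≤ f x) ∧ (∀ x, f x ≤ f₂ x) ∧ ∫ x, (f₂ x - f₁ x) ∂μ < ε) :
    μ {x | ¬ ContinuousAt f x} = 0 := by
  have hD : {x | ¬ ContinuousAt f x} ⊆
      ⋃ n : ℕ, {x | ¬ ∀ᶠ y in 𝓝 x, |f y - f x| < 1 / (n + 1)} := by
    intro x hx
    by_contra hsmall
    simp only [mem_iUnion, mem_ofPred_eq, not_exists, not_not] at hsmall
    refine hx (Metric.tendsto_nhds.2 fun ε hε => ?_)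
    obtain ⟨n, hn⟩ := exists_nat_one_div_lt hε
    filter_upwards [hsmall n] with y hy
    rw [Real.dist_eq]
    exact hy.trans hn
  exact measure_mono_null hD (measure_iUnion_null fun n =>
    measure_setOf_not_eventually_abs_sub_lt_eq_zero h (by positivity))

end Measure

/-- Let `X` be compact Hausdorff, `μ` a finite complete regular Borel measure on `X`, and
`f : X → ℝ` bounded. Then the set of discontinuity points of `f` is a measurable `μ`-null
set iff for every `ε > 0` there exist continuous `f₁ ≤ f ≤ f₂` with `∫ (f₂ - f₁) dμ < ε`. -/
theorem riemann_char {X : Type*} [TopologicalSpace X] [CompactSpace X] [T2Space X]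
    [MeasurableSpace X] [BorelSpace X]
    (μ : Measure X) [IsFiniteMeasure μ] (hcomplete : μ.IsComplete)
    (hreg : ∀ A : Set X, MeasurableSet A → ∀ ε > (0 : ℝ),
      ∃ F G : Set X, IsClosed F ∧ IsOpen G ∧ F ⊆ A ∧ A ⊆ G ∧ (μ (G \ F)).toReal < ε)
    (f : X → ℝ) (hf : ∃ C, ∀ x, |f x| ≤ C) :
    (MeasurableSet {x | ¬ ContinuousAt f x} ∧ μ {x | ¬ ContinuousAt f x} = 0) ↔
      ∀ ε > (0 : ℝ), ∃ f₁ f₂ : C(X, ℝ),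
        (∀ x, f₁ x ≤ f x) ∧ (∀ x, f x ≤ f₂ x) ∧ ∫ x, (f₂ x - f₁ x) ∂μ < ε := by
  constructor
  · rintro ⟨hDm, hD0⟩ ε hε
    obtain ⟨C, hC⟩ := hf
    refine exists_continuous_sandwich_integral_lt (fun x => (hC x).trans (le_abs_self C))
      (abs_nonneg C) (fun η hη => ?_) hε
    obtain ⟨F, G, -, hG, hFD, hDG, hGF⟩ := hreg _ hDm η hη
    refine ⟨G, hG, hDG, ?_⟩
    rwa [measureReal_def, ← measure_sdiff_null (measure_mono_null hFD hD0)]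
  · intro h
    have hD0 := measure_setOf_not_continuousAt_eq_zero h
    exact ⟨hcomplete.out _ hD0, hD0⟩
end

section
/- Let X be a compact Hausdorff space and μ a finite regular Borel measure on X with full support. If f : X → ℝ is bounded and its set of discontinuity points is a μ-null set, then disc(f) is a meager set; in particular the set of continuity points of f is dense in X. -/
/-!
The discontinuity set of `f` is the increasing union of the sets `{x | 1/n ≤ osc f x}`, which are
closed because the oscillation is upper semicontinuous. In a compact space they are compact, so
the discontinuity set is σ-compact; a σ-compact null set for a measure charging every nonempty
open set is meagre. Its complement is then residual, hence dense by the Baire category theorem.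
-/

open MeasureTheory Set

section Oscillation

variable {X E : Type*} [TopologicalSpace X] [PseudoEMetricSpace E]

lemma isOpen_setOf_oscillation_lt (f : X → E) (ε : ENNReal) :
    IsOpen {x | oscillation f x < ε} := by
  refine isOpen_iff_mem_nhds.2 fun x hx => ?_
  obtain ⟨S, hS, hSε⟩ : ∃ S ∈ (nhds x).map f, Metric.ediam S < ε := by
    simpa only [mem_ofPred_eq, oscillation, iInf_lt_iff, exists_prop] using hx
  obtain ⟨U, hUS, hU, hxU⟩ := mem_nhds_iff.1 hS
  filter_upwards [hU.mem_nhds hxU] with y hy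
  have hSy : S ∈ (nhds y).map f := Filter.mem_map.2 (Filter.mem_of_superset (hU.mem_nhds hy) hUS)
  exact (biInf_le _ hSy).trans_lt hSε

lemma isClosed_setOf_le_oscillation (f : X → E) (ε : ENNReal) :
    IsClosed {x | ε ≤ oscillation f x} := by
  simpa only [compl_ofPred, not_lt] using (isOpen_setOf_oscillation_lt f ε).isClosed_compl

lemma setOf_not_continuousAt_eq_iUnion (f : X → E) :
    {x | ¬ContinuousAt f x} = ⋃ n : ℕ, {x | (n : ENNReal)⁻¹ ≤ oscillation f x} := by
  ext x
  simp only [mem_ofPred_eq, mem_iUnion, ← Oscillation.eq_zero_iff_continuousAt]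
  constructor
  · intro hx
    exact (ENNReal.exists_inv_nat_lt hx).imp fun _ => le_of_lt
  · rintro ⟨n, hn⟩ hx
    exact ENNReal.inv_ne_zero.2 (ENNReal.natCast_ne_top n) (nonpos_iff_eq_zero.1 (hx ▸ hn))

lemma isSigmaCompact_setOf_not_continuousAt [CompactSpace X] (f : X → E) :
    IsSigmaCompact {x | ¬ContinuousAt f x} :=
  ⟨_, fun _ => (isClosed_setOf_le_oscillation f _).isCompact,
    (setOf_not_continuousAt_eq_iUnion f).symm⟩

end Oscillation

theorem disc_meager_general {X : Type*} [TopologicalSpace X] [CompactSpace X] [T2Space X]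
    [MeasurableSpace X]
    (μ : Measure X)
    (hsupp : ∀ U : Set X, IsOpen U → U.Nonempty → 0 < μ U)
    (f : X → ℝ)
    (hnull : μ {x | ¬ ContinuousAt f x} = 0) :
    IsMeagre {x | ¬ ContinuousAt f x} ∧ Dense {x | ContinuousAt f x} := by
  have : μ.IsOpenPosMeasure := ⟨fun U hU hne => (hsupp U hU hne).ne'⟩
  have hmeagre : IsMeagre {x | ¬ContinuousAt f x} :=
    .of_isSigmaCompact_null (μ := μ) (isSigmaCompact_setOf_not_continuousAt f) hnull
  refine ⟨hmeagre, ?_⟩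
  simpa only [compl_ofPred, not_not] using dense_of_mem_residual hmeagre

/-- Let `X` be a compact Hausdorff space and `μ` a finite regular Borel measure on `X` with
full support. If `f : X → ℝ` is bounded and its set of discontinuity points is a `μ`-null set,
then `disc(f)` is meager; in particular the set of continuity points of `f` is dense in `X`. -/
theorem disc_meager {X : Type*} [TopologicalSpace X] [CompactSpace X] [T2Space X]
    [MeasurableSpace X] [BorelSpace X]
    (μ : Measure X) [IsFiniteMeasure μ]
    (hreg : ∀ A : Set X, MeasurableSet A → ∀ ε > (0 : ℝ),
      ∃ F G : Set X, IsClosed F ∧ IsOpen G ∧ F ⊆ A ∧ A ⊆ G ∧ (μ (G \ F)).toReal < ε)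
    (hsupp : ∀ U : Set X, IsOpen U → U.Nonempty → 0 < μ U)
    (f : X → ℝ) (hf : ∃ C, ∀ x, |f x| ≤ C)
    (hnull : μ {x | ¬ ContinuousAt f x} = 0) :
    IsMeagre {x | ¬ ContinuousAt f x} ∧ Dense {x | ContinuousAt f x} :=
  disc_meager_general μ hsupp f hnull
end

section
/- Let X be an infinite discrete set and ω : Xⁿ → X an n-ary operation with n ≥ 1. If ω has a continuous extension to the Stone–Čech compactification βX (i.e., a continuous map (βX)ⁿ → βX commuting with the canonical embeddings), then for every subset S ⊆ X the preimage ω⁻¹[S] is a finite union of rectangles A₁ × ⋯ × Aₙ with Aᵢ ⊆ X. In particular, if X is an infinite group with multiplication ω, no such continuous extension exists. -/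
open Set

theorem stoneCech_rect_aux {X : Type*} [TopologicalSpace X] [DiscreteTopology X] {n : ℕ}
    (ω : (Fin n → X) → X)
    (ωβ : (Fin n → StoneCech X) → StoneCech X) (hcont : Continuous ωβ)
    (hext : ∀ v : Fin n → X, ωβ (fun i => stoneCechUnit (v i)) = stoneCechUnit (ω v))
    (S : Set X) : ∃ (k : ℕ) (A : Fin k → Fin n → Set X),
        ω ⁻¹' S = ⋃ i, Set.univ.pi (A i) := by
  classical
  set f : X → Bool := fun x => decide (x ∈ S) with hfdef
  have hf : Continuous f := continuous_of_discreteTopology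
  set g := stoneCechExtend hf with hgdef
  have hg : Continuous g := continuous_stoneCechExtend hf
  have hgu : ∀ x, g (stoneCechUnit x) = f x := fun x =>
    congrFun (stoneCechExtend_extends hf) x
  set C : Set (Fin n → StoneCech X) := (fun p => g (ωβ p)) ⁻¹' {true} with hCdef
  have hCopen : IsOpen C := (isOpen_discrete _).preimage (hg.comp hcont)
  have hCclosed : IsClosed C := (isClosed_discrete _).preimage (hg.comp hcont)
  have hCcompact : IsCompact C := hCclosed.isCompact
  -- key equivalence
  have hkey : ∀ v : Fin n → X, ω v ∈ S ↔ (fun i => stoneCechUnit (v i)) ∈ C := by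
    intro v
    simp only [hCdef, mem_preimage, mem_singleton_iff, hext, hgu, hfdef, decide_eq_true_eq]
  choose! I u hu hsub using isOpen_pi_iff.mp hCopen
  have hcover : C ⊆ ⋃ x ∈ C, (I x : Set (Fin n)).pi (u x) := by
    intro x hx
    exact mem_biUnion hx fun a ha => (hu x hx a ha).2
  obtain ⟨t, ht⟩ := hCcompact.elim_finite_subcover
    (fun x : C => ((I x : Set (Fin n)).pi (u x)))
    (fun x => isOpen_set_pi (Finset.finite_toSet _) fun a ha => (hu x x.2 a ha).1)
    (by intro x hx; exact mem_iUnion.mpr ⟨⟨x, hx⟩, fun a ha => (hu x hx a ha).2⟩)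
  set e := t.equivFin
  refine ⟨t.card, fun i j => if j ∈ I (e.symm i) then stoneCechUnit ⁻¹' (u (e.symm i) j)
    else univ, ?_⟩
  ext v
  simp only [mem_preimage, mem_iUnion, mem_univ_pi]
  rw [hkey v]
  constructor
  · intro hvC
    obtain ⟨x, hxU⟩ := mem_iUnion.mp (ht hvC)
    obtain ⟨hxt, hxp⟩ := mem_iUnion.mp hxU
    refine ⟨e ⟨x, hxt⟩, fun j => ?_⟩
    simp only [Equiv.symm_apply_apply]
    by_cases hj : j ∈ I x
    · rw [if_pos hj]; exact hxp j hj
    · rw [if_neg hj]; trivial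
  · rintro ⟨i, hi⟩
    have hmem : (fun j => stoneCechUnit (v j)) ∈ (I (e.symm i) : Set (Fin n)).pi
        (u (e.symm i)) := by
      intro j hj
      have hj' : j ∈ I ((e.symm i : ↥C) : Fin n → StoneCech X) := hj
      have := hi j
      rwa [if_pos hj'] at this
    exact hsub _ (e.symm i).1.2 hmem

/-- Let `X` be an infinite discrete set and `ω : Xⁿ → X` an `n`-ary operation, `n ≥ 1`.
If `ω` has a continuous extension to the Stone–Čech compactification `βX`, then for every
`S ⊆ X` the preimage `ω⁻¹[S]` is a finite union of rectangles `A₁ × ⋯ × Aₙ`. In particular,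
if `X` is an infinite group, its multiplication has no continuous extension to `βX`. -/
theorem stoneCech_extension_rectangles {X : Type*} [TopologicalSpace X] [DiscreteTopology X]
    [Infinite X] [Group X] {n : ℕ} (hn : 1 ≤ n)
    (ω : (Fin n → X) → X)
    (ωβ : (Fin n → StoneCech X) → StoneCech X) (hcont : Continuous ωβ)
    (hext : ∀ v : Fin n → X, ωβ (fun i => stoneCechUnit (v i)) = stoneCechUnit (ω v)) :
    (∀ S : Set X, ∃ (k : ℕ) (A : Fin k → Fin n → Set X),
        ω ⁻¹' S = ⋃ i, Set.univ.pi (A i)) ∧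
    ¬ ∃ mβ : (Fin 2 → StoneCech X) → StoneCech X, Continuous mβ ∧
        ∀ v : Fin 2 → X, mβ (fun i => stoneCechUnit (v i)) = stoneCechUnit (v 0 * v 1) := by
  constructor
  · exact fun S => stoneCech_rect_aux ω ωβ hcont hext S
  · rintro ⟨mβ, hmcont, hmext⟩
    obtain ⟨k, A, hA⟩ := stoneCech_rect_aux (fun v : Fin 2 → X => v 0 * v 1) mβ hmcont
      hmext ({1} : Set X)
    set P : Set (Fin 2 → X) := (fun v : Fin 2 → X => v 0 * v 1) ⁻¹' {1} with hPdef
    have hPinf : P.Infinite := by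
      refine Set.infinite_of_injective_forall_mem (f := fun x : X => ![x, x⁻¹]) ?_ ?_
      · intro a b h
        have := congrFun h 0
        simpa using this
      · intro a
        simp [hPdef]
    have hPfin : P.Finite := by
      rw [hA]
      apply Set.finite_iUnion
      intro i
      apply Set.Subsingleton.finite
      intro v hv w hw
      have hvP : v ∈ P := hA ▸ mem_iUnion.mpr ⟨i, hv⟩
      have hwP : w ∈ P := hA ▸ mem_iUnion.mpr ⟨i, hw⟩
      have hv1 : v 0 * v 1 = 1 := hvP
      have hw1 : w 0 * w 1 = 1 := hwP
      have humem : Function.update w 0 (v 0) ∈ univ.pi (A i) := by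
        intro j _
        by_cases hj : j = 0
        · subst hj; rw [Function.update_self]; exact hv 0 trivial
        · rw [Function.update_of_ne hj]; exact hw j trivial
      have huP : Function.update w 0 (v 0) ∈ P := hA ▸ mem_iUnion.mpr ⟨i, humem⟩
      have hu1 : v 0 * w 1 = 1 := by
        have : Function.update w 0 (v 0) 0 * Function.update w 0 (v 0) 1 = 1 := huP
        rwa [Function.update_self, Function.update_of_ne (by decide)] at this
      have h0 : v 0 = w 0 := mul_right_cancel (hu1.trans hw1.symm)
      have h1 : v 1 = w 1 := by
        apply mul_left_cancel (a := v 0)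
        rw [hv1, hu1]
      funext j
      fin_cases j
      · exact h0
      · exact h1
    exact hPinf hPfin
end

section
/- There is no mean on the bounded functions of the free group F₂ on two generators x, y that is simultaneously invariant under the right translations w ↦ wx⁻¹ and w ↦ wy⁻¹. Consequently, the free group on two generators is not amenable. -/
/-- A bounded real-valued function on the free group. -/
def BddFn (f : FreeGroup Bool → ℝ) : Prop := ∃ C : ℝ, ∀ w, |f w| ≤ C

namespace FreeGroupMean

open FreeGroup

/-- Reducing a reduced word with one extra letter appended: either the last letter cancels,
or nothing happens. -/
theorem reduce_concat {α} [DecidableEq α] (L : List (α × Bool)) (hL : FreeGroup.reduce L = L)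
    (s : α × Bool) :
    FreeGroup.reduce (L ++ [s]) =
      if L.getLast? = some (s.1, !s.2) then L.dropLast else L ++ [s] := by
  have h1 : FreeGroup.reduce (L ++ [s]) = invRev (FreeGroup.reduce (invRev (L ++ [s]))) := by
    rw [reduce_invRev, invRev_invRev]
  have h2 : invRev (L ++ [s]) = (s.1, !s.2) :: invRev L := by
    simp [invRev]
  rcases List.eq_nil_or_concat L with rfl | ⟨L', t, rfl⟩
  case _ => simp [invRev]
  all_goals simp only [List.concat_eq_append] at *
  · have h3 : invRev (L' ++ [t]) = (t.1, !t.2) :: invRev L' := by simp [invRev]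
    have hred : FreeGroup.reduce (invRev (L' ++ [t])) = invRev (L' ++ [t]) := by
      rw [reduce_invRev, hL]
    rw [h1, h2, FreeGroup.reduce.cons, hred, h3]
    by_cases hc : t = (s.1, !s.2)
    · subst hc
      simp [invRev_invRev]
    · have hc' : ¬((s.1, !s.2).1 = (t.1, !t.2).1 ∧ (s.1, !s.2).2 = !(t.1, !t.2).2) := by
        rintro ⟨ha, hb⟩
        simp only [Bool.not_not] at hb
        exact hc (Prod.ext ha.symm hb.symm)
      dsimp only
      rw [if_neg hc', ← h3, ← h2, invRev_invRev, if_neg (by simp [hc])]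

theorem toWord_mul_inv (w : FreeGroup Bool) (a : Bool) :
    (w * (FreeGroup.of a)⁻¹).toWord =
      if w.toWord.getLast? = some (a, true) then w.toWord.dropLast
      else w.toWord ++ [(a, false)] := by
  have h0 : w * (FreeGroup.of a)⁻¹ = FreeGroup.mk (w.toWord ++ [(a, false)]) := by
    conv_lhs => rw [← FreeGroup.mk_toWord (x := w)]
    rw [show (FreeGroup.of a) = FreeGroup.mk [(a, true)] from rfl, FreeGroup.inv_mk,
      FreeGroup.mul_mk]
    rfl
  rw [h0, FreeGroup.toWord_mk, reduce_concat _ (FreeGroup.reduce_toWord w) (a, false)]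
  rfl

theorem getLast_mul_inv (w : FreeGroup Bool) (a : Bool) :
    ((w * (FreeGroup.of a)⁻¹).toWord.getLast? = some (a, false)) ↔
      ¬(w.toWord.getLast? = some (a, true)) := by
  rw [toWord_mul_inv]
  by_cases hc : w.toWord.getLast? = some (a, true)
  · rw [if_pos hc]
    simp only [hc, not_true, iff_false]
    intro hD
    -- then w.toWord would contain the adjacent pair (a,false)(a,true), contradicting reducedness
    obtain ⟨D', hD'⟩ := List.getLast?_eq_some_iff.mp hD
    have hw : w.toWord = w.toWord.dropLast ++ [(a, true)] := by
      conv_lhs => rw [← List.dropLast_append_getLast? _ hc]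
    rw [hD'] at hw
    have : FreeGroup.reduce w.toWord = D' ++ (a, false) :: (a, !false) :: [] := by
      rw [FreeGroup.reduce_toWord, hw]; simp
    exact FreeGroup.reduce.not this
  · rw [if_neg hc]
    simp [hc]

/-- The indicator of the set of words whose last letter is `(a, b)`. -/
noncomputable def lastIs (a b : Bool) : FreeGroup Bool → ℝ :=
  fun w => if w.toWord.getLast? = some (a, b) then 1 else 0

theorem lastIs_bdd (a b : Bool) : BddFn (lastIs a b) := by
  refine ⟨1, fun w => ?_⟩
  unfold lastIs
  split <;> simp

theorem lastIs_nonneg (a b : Bool) (w : FreeGroup Bool) : 0 ≤ lastIs a b w := by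
  unfold lastIs; split <;> simp

theorem key (a : Bool) (w : FreeGroup Bool) :
    lastIs a false (w * (FreeGroup.of a)⁻¹) = 1 - lastIs a true w := by
  unfold lastIs
  by_cases hc : w.toWord.getLast? = some (a, true)
  · rw [if_pos hc, if_neg (by rw [getLast_mul_inv]; simpa using hc)]
    norm_num
  · rw [if_neg hc, if_pos (by rw [getLast_mul_inv]; exact hc)]
    norm_num

theorem bdd_sub_one (f : FreeGroup Bool → ℝ) (hf : BddFn f) :
    BddFn (fun w => 1 - f w) := by
  obtain ⟨C, hC⟩ := hf
  refine ⟨1 + C, fun w => ?_⟩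
  have h := abs_le.mp (hC w)
  rw [abs_le]
  exact ⟨by show -(1 + C) ≤ 1 - f w; linarith [h.1, h.2],
    by show 1 - f w ≤ 1 + C; linarith [h.1, h.2]⟩

theorem bdd_add (f g : FreeGroup Bool → ℝ) (hf : BddFn f) (hg : BddFn g) :
    BddFn (f + g) := by
  obtain ⟨C, hC⟩ := hf
  obtain ⟨D, hD⟩ := hg
  exact ⟨C + D, fun w => (abs_add_le _ _).trans (add_le_add (hC w) (hD w))⟩

end FreeGroupMean

open FreeGroupMean

/-- There is no mean on the bounded functions of the free group `F₂` on two generators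
`x = of true`, `y = of false` that is simultaneously invariant under the right translations
`w ↦ w x⁻¹` and `w ↦ w y⁻¹`. Consequently, `F₂` is not amenable. -/
theorem freeGroup_no_biinvariant_mean
    (m : (FreeGroup Bool → ℝ) → ℝ)
    (hadd : ∀ f g, BddFn f → BddFn g → m (f + g) = m f + m g)
    (hsmul : ∀ (c : ℝ) f, BddFn f → m (c • f) = c * m f)
    (hpos : ∀ f, BddFn f → (∀ w, 0 ≤ f w) → 0 ≤ m f)
    (hone : m (fun _ => 1) = 1)
    (hinv₁ : ∀ f, BddFn f → m (fun w => f (w * (FreeGroup.of true)⁻¹)) = m f)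
    (hinv₂ : ∀ f, BddFn f → m (fun w => f (w * (FreeGroup.of false)⁻¹)) = m f) :
    False := by
  -- Step: for each generator a, m(χ_{a,false}) + m(χ_{a,true}) = 1
  have step : ∀ a : Bool,
      (∀ f, BddFn f → m (fun w => f (w * (FreeGroup.of a)⁻¹)) = m f) →
      m (lastIs a false) + m (lastIs a true) = 1 := by
    intro a hinva
    have h1 : m (fun w => lastIs a false (w * (FreeGroup.of a)⁻¹)) = m (lastIs a false) :=
      hinva _ (lastIs_bdd a false)
    have h2 : (fun w => lastIs a false (w * (FreeGroup.of a)⁻¹)) =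
        (fun w => 1 - lastIs a true w) := by
      funext w; exact key a w
    rw [h2] at h1
    have h3 : ((fun w => 1 - lastIs a true w) + lastIs a true) = (fun _ => 1) := by
      funext w; simp
    have h4 : m ((fun w => 1 - lastIs a true w) + lastIs a true)
        = m (fun w => 1 - lastIs a true w) + m (lastIs a true) :=
      hadd _ _ (bdd_sub_one _ (lastIs_bdd a true)) (lastIs_bdd a true)
    rw [h3, hone] at h4
    linarith
  have hA := step true hinv₁
  have hB := step false hinv₂
  -- the four indicators sum to at most 1 pointwise
  set g : FreeGroup Bool → ℝ :=
    (lastIs true true + lastIs true false) + (lastIs false true + lastIs false false) with hg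
  have hgbdd : BddFn g := bdd_add _ _ (bdd_add _ _ (lastIs_bdd _ _) (lastIs_bdd _ _))
    (bdd_add _ _ (lastIs_bdd _ _) (lastIs_bdd _ _))
  have hmg : m g = 2 := by
    rw [hg, hadd _ _ (bdd_add _ _ (lastIs_bdd _ _) (lastIs_bdd _ _))
        (bdd_add _ _ (lastIs_bdd _ _) (lastIs_bdd _ _)),
      hadd _ _ (lastIs_bdd _ _) (lastIs_bdd _ _),
      hadd _ _ (lastIs_bdd _ _) (lastIs_bdd _ _)]
    linarith
  have hgle : ∀ w, g w ≤ 1 := by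
    intro w
    rw [hg]
    simp only [Pi.add_apply]
    unfold lastIs
    rcases h : w.toWord.getLast? with _ | ⟨p, q⟩
    · simp
    · cases p <;> cases q <;> simp
  have hpos' : 0 ≤ m (fun w => 1 - g w) :=
    hpos _ (bdd_sub_one _ hgbdd) (fun w => by linarith [hgle w])
  have h5 : ((fun w => 1 - g w) + g) = (fun _ => 1) := by
    funext w; simp
  have h6 : m ((fun w => 1 - g w) + g) = m (fun w => 1 - g w) + m g :=
    hadd _ _ (bdd_sub_one _ hgbdd) hgbdd
  rw [h5, hone, hmg] at h6
  linarith
end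

section
/- The set AC(ℤ) of almost convergent bounded functions on ℤ (functions whose Banach density mean value is unique) is not closed under pointwise multiplication: there exist sets A, B ⊆ ℤ each with Banach density 1/2 such that 𝟙_A and 𝟙_B are almost convergent but 𝟙_{A∩B} is not, since A ∩ B has lower Banach density 0 and upper Banach density 1/2. -/
/-!
Both `A = 2ℤ` and `B` contain exactly one element of every pair `{2j, 2j + 1}`, so every window
of length `N` meets them in `N / 2 ± 1` points and both have Banach density `1/2` uniformly.
The set `B` equals `2ℤ` on the blocks `⌊x / 2⌋ ∈ [k², (k + 1)²)` with `k` even and `2ℤ + 1` on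
those with `k` odd (any blocks of unbounded length would do, e.g. the factorial ones). Hence
`A ∩ B` is empty on the odd blocks and equals `A` on the even ones, and since blocks become
arbitrarily long, windows of both kinds exist for every `N`: the lower density of `A ∩ B` is `0`
and its upper density is that of `A`.
-/

open Filter Set

/-- The Cesàro window average `s_{N,f}(n) = (1/N) ∑_{k=n}^{n+N-1} f(k)`. -/
noncomputable def winAvg (f : ℤ → ℝ) (N : ℕ) (n : ℤ) : ℝ :=
  (∑ k ∈ Finset.range N, f (n + k)) / N

section WindowSums
open Finset
variable {f : ℤ → ℝ}

theorem abs_sum_window_sub_half_le_of_even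
    (hpair : ∀ m, Even m → f m + f (m + 1) = 1) (h0 : ∀ x, 0 ≤ f x) (h1 : ∀ x, f x ≤ 1)
    (N : ℕ) {n : ℤ} (hn : Even n) :
    |∑ k ∈ range N, f (n + k) - N / 2| ≤ 1 / 2 := by
  induction N using Nat.twoStepInduction generalizing n with
  | zero => norm_num
  | one =>
    rw [sum_range_one, abs_le]
    constructor <;> push_cast <;> linarith [h0 (n + 0), h1 (n + 0)]
  | more N ih _ =>
    have hsplit : ∑ k ∈ range (N + 2), f (n + k)
        = (f n + f (n + 1)) + ∑ k ∈ range N, f (n + 2 + k) := by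
      rw [add_comm N, sum_range_add, sum_range_succ, sum_range_one]
      push_cast
      ring_nf
    rw [hsplit, hpair n hn]
    convert ih (hn.add even_two) using 2
    push_cast
    ring

theorem abs_sum_window_sub_half_le
    (hpair : ∀ m, Even m → f m + f (m + 1) = 1) (h0 : ∀ x, 0 ≤ f x) (h1 : ∀ x, f x ≤ 1)
    (N : ℕ) (n : ℤ) :
    |∑ k ∈ range N, f (n + k) - N / 2| ≤ 1 := by
  rcases Int.even_or_odd n with hn | hn
  · exact (abs_sum_window_sub_half_le_of_even hpair h0 h1 N hn).trans (by norm_num)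
  cases N with
  | zero => simp
  | succ N =>
    have hrest := abs_sum_window_sub_half_le_of_even hpair h0 h1 N hn.add_one
    have hfirst : |f n - 1 / 2| ≤ 1 / 2 := abs_le.2 ⟨by linarith [h0 n], by linarith [h1 n]⟩
    calc |∑ k ∈ range (N + 1), f (n + k) - ↑(N + 1) / 2|
        = |(∑ k ∈ range N, f (n + 1 + k) - N / 2) + (f n - 1 / 2)| := by
          rw [sum_range_succ']
          push_cast
          ring_nf
      _ ≤ 1 := (abs_add_le _ _).trans (by linarith)

end WindowSums

theorem abs_winAvg_sub_half_le {f : ℤ → ℝ}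
    (hpair : ∀ m, Even m → f m + f (m + 1) = 1) (h0 : ∀ x, 0 ≤ f x) (h1 : ∀ x, f x ≤ 1)
    {N : ℕ} (hN : 0 < N) (n : ℤ) :
    |winAvg f N n - 1 / 2| ≤ 1 / N := by
  have hN' : (0 : ℝ) < N := Nat.cast_pos.2 hN
  have : winAvg f N n - 1 / 2 = (∑ k ∈ Finset.range N, f (n + k) - N / 2) / N := by
    unfold winAvg
    field_simp
  rw [this, abs_div, Nat.abs_cast]
  exact div_le_div_of_nonneg_right (abs_sum_window_sub_half_le hpair h0 h1 N n) hN'.le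

theorem winAvg_nonneg {f : ℤ → ℝ} (h0 : ∀ x, 0 ≤ f x) (N : ℕ) (n : ℤ) : 0 ≤ winAvg f N n :=
  div_nonneg (Finset.sum_nonneg fun _ _ => h0 _) N.cast_nonneg

theorem winAvg_indicator_mono {S T : Set ℤ} (h : S ⊆ T) (N : ℕ) (n : ℤ) :
    winAvg (S.indicator 1) N n ≤ winAvg (T.indicator 1) N n :=
  div_le_div_of_nonneg_right
    (Finset.sum_le_sum fun _ _ => indicator_le_indicator_of_subset h (fun _ => zero_le_one) _)
    N.cast_nonneg

section InfSup
variable {ι : Type*} {u : ℕ → ι → ℝ} {ε : ℕ → ℝ} {c : ℝ}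

theorem tendsto_iInf_of_forall_le_of_exists_le (hε : Tendsto ε atTop (nhds 0))
    (hlow : ∀ᶠ N in atTop, ∀ i, c - ε N ≤ u N i) (hex : ∀ᶠ N in atTop, ∃ i, u N i ≤ c + ε N) :
    Tendsto (fun N => ⨅ i, u N i) atTop (nhds c) := by
  refine tendsto_of_tendsto_of_tendsto_of_le_of_le'
    (by simpa using tendsto_const_nhds.sub hε) (by simpa using tendsto_const_nhds.add hε) ?_ ?_
  · filter_upwards [hlow, hex] with N hl ⟨i, _⟩
    have : Nonempty ι := ⟨i⟩
    exact le_ciInf hl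
  · filter_upwards [hlow, hex] with N hl ⟨i, hi⟩
    exact (ciInf_le ⟨c - ε N, forall_mem_range.2 hl⟩ i).trans hi

theorem tendsto_iSup_of_forall_le_of_exists_le (hε : Tendsto ε atTop (nhds 0))
    (hup : ∀ᶠ N in atTop, ∀ i, u N i ≤ c + ε N) (hex : ∀ᶠ N in atTop, ∃ i, c - ε N ≤ u N i) :
    Tendsto (fun N => ⨆ i, u N i) atTop (nhds c) := by
  refine tendsto_of_tendsto_of_tendsto_of_le_of_le'
    (by simpa using tendsto_const_nhds.sub hε) (by simpa using tendsto_const_nhds.add hε) ?_ ?_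
  · filter_upwards [hup, hex] with N hu ⟨i, hi⟩
    exact hi.trans (le_ciSup ⟨c + ε N, forall_mem_range.2 hu⟩ i)
  · filter_upwards [hup, hex] with N hu ⟨i, _⟩
    have : Nonempty ι := ⟨i⟩
    exact ciSup_le hu

end InfSup

def OnePerPair (S : Set ℤ) : Prop := ∀ m : ℤ, Even m → (m + 1 ∈ S ↔ m ∉ S)

namespace OnePerPair
variable {S : Set ℤ}

theorem indicator_add_indicator_succ (hS : OnePerPair S) {m : ℤ} (hm : Even m) :
    S.indicator 1 m + S.indicator 1 (m + 1) = (1 : ℝ) := by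
  by_cases h : m ∈ S <;> simp [h, hS m hm]

theorem abs_winAvg_sub_half_le (hS : OnePerPair S) {N : ℕ} (hN : 0 < N) (n : ℤ) :
    |winAvg (S.indicator 1) N n - 1 / 2| ≤ 1 / N :=
  _root_.abs_winAvg_sub_half_le (fun _ => hS.indicator_add_indicator_succ)
    (indicator_nonneg fun _ _ => zero_le_one)
    (indicator_le_self' fun _ _ => zero_le_one) hN n

theorem half_sub_le_winAvg (hS : OnePerPair S) {N : ℕ} (hN : 0 < N) (n : ℤ) :
    1 / 2 - 1 / N ≤ winAvg (S.indicator 1) N n :=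
  sub_le_comm.1 (abs_sub_le_iff.1 (hS.abs_winAvg_sub_half_le hN n)).2

theorem winAvg_le_half_add (hS : OnePerPair S) {N : ℕ} (hN : 0 < N) (n : ℤ) :
    winAvg (S.indicator 1) N n ≤ 1 / 2 + 1 / N :=
  sub_le_iff_le_add'.1 (abs_sub_le_iff.1 (hS.abs_winAvg_sub_half_le hN n)).1

theorem tendsto_iInf_winAvg (hS : OnePerPair S) :
    Tendsto (fun N => ⨅ n : ℤ, winAvg (S.indicator 1) N n) atTop (nhds (1 / 2)) :=
  tendsto_iInf_of_forall_le_of_exists_le tendsto_one_div_atTop_nhds_zero_nat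
    ((eventually_gt_atTop 0).mono fun _ hN => hS.half_sub_le_winAvg hN)
    ((eventually_gt_atTop 0).mono fun _ hN => ⟨0, hS.winAvg_le_half_add hN 0⟩)

theorem tendsto_iSup_winAvg (hS : OnePerPair S) :
    Tendsto (fun N => ⨆ n : ℤ, winAvg (S.indicator 1) N n) atTop (nhds (1 / 2)) :=
  tendsto_iSup_of_forall_le_of_exists_le tendsto_one_div_atTop_nhds_zero_nat
    ((eventually_gt_atTop 0).mono fun _ hN => hS.winAvg_le_half_add hN)
    ((eventually_gt_atTop 0).mono fun _ hN => ⟨0, hS.half_sub_le_winAvg hN 0⟩)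

end OnePerPair

/-- `x` lies in block `k` when `⌊x / 2⌋ ∈ [k², (k + 1)²)`; all negative `x` lie in block `0`. -/
def blockIdx (x : ℤ) : ℕ := Nat.sqrt (x / 2).toNat

theorem blockIdx_add_one_of_even {m : ℤ} (hm : Even m) : blockIdx (m + 1) = blockIdx m := by
  obtain ⟨r, rfl⟩ := hm
  unfold blockIdx
  congr 2
  omega

theorem blockIdx_two_mul_sq_add {k j : ℕ} (hj : j ≤ 4 * k + 1) :
    blockIdx (2 * k * k + j) = k := by
  have h : ((2 * k * k + j : ℤ) / 2).toNat = k * k + j / 2 := by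
    rw [show (2 * k * k + j : ℤ) = ((2 * (k * k) + j : ℕ) : ℤ) by push_cast; ring]
    generalize k * k = s
    omega
  rw [blockIdx, h]
  exact Nat.sqrt_add_eq k (by omega)

def blockParitySet : Set ℤ := {x | Even x ↔ Even (blockIdx x)}

theorem onePerPair_even : OnePerPair {x : ℤ | Even x} := fun m hm => by
  simp [hm]

theorem onePerPair_blockParitySet : OnePerPair blockParitySet := fun m hm => by
  simp only [blockParitySet, mem_ofPred_eq, blockIdx_add_one_of_even hm, Int.even_add_one]
  tauto

theorem even_inter_blockParitySet :
    {x : ℤ | Even x} ∩ blockParitySet = {x | Even x ∧ Even (blockIdx x)} := by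
  ext x
  simp only [blockParitySet, mem_inter_iff, mem_ofPred_eq]
  tauto

theorem exists_winAvg_even_inter_blockParitySet_eq_zero (N : ℕ) :
    ∃ n, winAvg (({x : ℤ | Even x} ∩ blockParitySet).indicator 1) N n = 0 := by
  refine ⟨2 * (2 * N + 1 : ℕ) * (2 * N + 1 : ℕ), ?_⟩
  rw [winAvg, Finset.sum_eq_zero fun j hj => ?_, zero_div]
  have hj : j < N := Finset.mem_range.1 hj
  rw [even_inter_blockParitySet, indicator_of_notMem]
  rw [mem_ofPred_eq, blockIdx_two_mul_sq_add (by omega)]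
  simp

theorem exists_winAvg_even_inter_blockParitySet_eq (N : ℕ) :
    ∃ n, winAvg (({x : ℤ | Even x} ∩ blockParitySet).indicator 1) N n
      = winAvg ({x : ℤ | Even x}.indicator 1) N n := by
  refine ⟨2 * (2 * N : ℕ) * (2 * N : ℕ), ?_⟩
  unfold winAvg
  congr 1
  refine Finset.sum_congr rfl fun j hj => ?_
  have hj : j < N := Finset.mem_range.1 hj
  have hblock : Even (blockIdx (2 * (2 * N : ℕ) * (2 * N : ℕ) + j)) := by
    rw [blockIdx_two_mul_sq_add (by omega)]
    exact even_two_mul N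
  simp only [even_inter_blockParitySet, indicator_apply, mem_ofPred_eq, hblock, and_true]

/-- The set `AC(ℤ)` of almost convergent bounded functions on `ℤ` is not closed under
pointwise multiplication: there exist sets `A, B ⊆ ℤ`, each of Banach density `1/2`,
such that `𝟙_A` and `𝟙_B` are almost convergent but `𝟙_{A∩B}` is not, since `A ∩ B`
has lower Banach density `0` and upper Banach density `1/2`. -/
theorem almostConvergent_not_closed_under_mul :
    ∃ A B : Set ℤ,
      Tendsto (fun N => ⨅ n : ℤ, winAvg (A.indicator 1) N n) atTop (nhds (1 / 2)) ∧
      Tendsto (fun N => ⨆ n : ℤ, winAvg (A.indicator 1) N n) atTop (nhds (1 / 2)) ∧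
      Tendsto (fun N => ⨅ n : ℤ, winAvg (B.indicator 1) N n) atTop (nhds (1 / 2)) ∧
      Tendsto (fun N => ⨆ n : ℤ, winAvg (B.indicator 1) N n) atTop (nhds (1 / 2)) ∧
      Tendsto (fun N => ⨅ n : ℤ, winAvg ((A ∩ B).indicator 1) N n) atTop (nhds 0) ∧
      Tendsto (fun N => ⨆ n : ℤ, winAvg ((A ∩ B).indicator 1) N n) atTop (nhds (1 / 2)) := by
  have hA := onePerPair_even
  have hB := onePerPair_blockParitySet
  refine ⟨_, _, hA.tendsto_iInf_winAvg, hA.tendsto_iSup_winAvg, hB.tendsto_iInf_winAvg,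
    hB.tendsto_iSup_winAvg, ?_, ?_⟩
  · refine tendsto_iInf_of_forall_le_of_exists_le (ε := fun _ => 0) tendsto_const_nhds
      (.of_forall fun N n => ?_) (.of_forall fun N => ?_)
    · rw [sub_zero]
      exact winAvg_nonneg (indicator_nonneg fun _ _ => zero_le_one) N n
    · obtain ⟨n, hn⟩ := exists_winAvg_even_inter_blockParitySet_eq_zero N
      exact ⟨n, hn.trans_le (add_zero 0).ge⟩
  · refine tendsto_iSup_of_forall_le_of_exists_le tendsto_one_div_atTop_nhds_zero_nat ?_ ?_ <;>
      filter_upwards [eventually_gt_atTop 0] with N hN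
    · exact fun n => (winAvg_indicator_mono inter_subset_left N n).trans
        (hA.winAvg_le_half_add hN n)
    · obtain ⟨n, hn⟩ := exists_winAvg_even_inter_blockParitySet_eq N
      exact ⟨n, hn ▸ hA.half_sub_le_winAvg hN n⟩
end

section
/- Let X be a topological space and J(X) the set of bounded real-valued functions on X having a generalized jump discontinuity. Then J(X) is open in B(X) with respect to the topology of uniform convergence: if f has a g.j.d. witnessed by open sets O₁, O₂ with dist(f(O₁), f(O₂)) = ε > 0, then any g with ‖f − g‖_∞ < ε/8 also has a g.j.d. -/
open Set

/-- A bounded function `f : X → ℝ` has a generalized jump discontinuity (g.j.d.) if there are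
open sets `O₁, O₂` and a point in both closures, with `closure (f '' O₁)` and
`closure (f '' O₂)` disjoint. -/
def HasGJD {X : Type*} [TopologicalSpace X] (f : X → ℝ) : Prop :=
  ∃ (x : X) (O₁ O₂ : Set X), IsOpen O₁ ∧ IsOpen O₂ ∧
    x ∈ closure O₁ ∩ closure O₂ ∧ closure (f '' O₁) ∩ closure (f '' O₂) = ∅

/-- The set of bounded functions with a g.j.d. is open in the uniform topology: if `f` has a
g.j.d. witnessed by `O₁, O₂` with `dist (f(O₁), f(O₂)) = ε > 0`, then any `g` with
`‖f − g‖_∞ < ε/8` also has a g.j.d. -/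
theorem gjd_open {X : Type*} [TopologicalSpace X] (f g : X → ℝ)
    (hf : ∃ C, ∀ x, |f x| ≤ C) (hg : ∃ C, ∀ x, |g x| ≤ C)
    (x : X) (O₁ O₂ : Set X) (hO₁ : IsOpen O₁) (hO₂ : IsOpen O₂)
    (hx : x ∈ closure O₁ ∩ closure O₂)
    (ε : ℝ) (hε : 0 < ε)
    (hsep : ∀ a ∈ f '' O₁, ∀ b ∈ f '' O₂, ε ≤ |a - b|)
    (hclose : ∀ y, |f y - g y| < ε / 8) :
    HasGJD g := by
  refine ⟨x, O₁, O₂, hO₁, hO₂, hx, ?_⟩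
  by_contra h
  obtain ⟨a, ha₁, ha₂⟩ := Set.nonempty_iff_ne_empty.mpr h
  obtain ⟨b₁, hb₁, hd₁⟩ := Metric.mem_closure_iff.mp ha₁ (ε/8) (by linarith)
  obtain ⟨b₂, hb₂, hd₂⟩ := Metric.mem_closure_iff.mp ha₂ (ε/8) (by linarith)
  obtain ⟨y₁, hy₁, rfl⟩ := hb₁
  obtain ⟨y₂, hy₂, rfl⟩ := hb₂
  have hs := hsep (f y₁) ⟨y₁, hy₁, rfl⟩ (f y₂) ⟨y₂, hy₂, rfl⟩
  have h1 := hclose y₁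
  have h2 := hclose y₂
  rw [Real.dist_eq] at hd₁ hd₂
  have : |f y₁ - f y₂| < ε := by
    have := abs_sub_lt_iff.mp hd₁
    have := abs_sub_lt_iff.mp hd₂
    have := abs_sub_lt_iff.mp h1
    have := abs_sub_lt_iff.mp h2
    rw [abs_sub_lt_iff]
    constructor <;> linarith
  linarith
end

section
/- Let X be a compact Hausdorff space and μ a finite complete regular Borel measure with supp(μ) = X. If f : X → ℝ is μ-Riemann integrable and has no generalized jump discontinuity, then there exists a unique continuous function f_r : X → ℝ that agrees with f on the set of continuity points of f. -/
/-!
The continuity points of `f` are dense: their complement is null, and nonempty open sets have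
positive measure. Along the continuity points, `f` has at most one cluster value at each `x`:
if `r < a < b < s` with `r`, `s` both cluster values, then the interiors of `{f < a}` and
`{f > b}` accumulate at `x`, because each of these sets is a neighbourhood of every continuity
point in it, and this is a generalized jump discontinuity at `x`. Since `f` is bounded, `f`
therefore converges along the continuity points at every `x`, and extending `f` from this dense
set by these limits gives the continuous function, unique by density.
-/

open MeasureTheory Set Filter Topology

section

variable {X Y : Type*} [TopologicalSpace X] [TopologicalSpace Y]

theorem existsUnique_continuousMap_eqOn_of_tendsto_nhdsWithin [T3Space Y] {A : Set X}
    (hA : Dense A) {f : X → Y} (hf : ContinuousOn f A)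
    (hlim : ∀ x, ∃ y, Tendsto f (𝓝[A] x) (𝓝 y)) :
    ∃! g : C(X, Y), ∀ x ∈ A, g x = f x := by
  refine ⟨⟨extendFrom A f, continuous_extendFrom hA hlim⟩, extendFrom_extends hf, ?_⟩
  intro g hg
  ext x
  exact congrFun (Continuous.ext_on hA g.continuous (continuous_extendFrom hA hlim)
    fun y hy => (hg y hy).trans (extendFrom_extends hf y hy).symm) x

theorem mem_closure_interior_preimage_of_mapClusterPt {f : X → Y} {x : X} {y : Y}
    {U : Set Y} (hU : IsOpen U) (hyU : y ∈ U)
    (hy : MapClusterPt y (𝓝[{z | ContinuousAt f z}] x) f) :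
    x ∈ closure (interior (f ⁻¹' U)) := by
  rw [mem_closure_iff_nhds]
  intro V hV
  obtain ⟨z, hzU, hz, hzV⟩ : ∃ z, f z ∈ U ∧ ContinuousAt f z ∧ z ∈ V :=
    ((mapClusterPt_iff_frequently.1 hy U (hU.mem_nhds hyU)).and_eventually
      (inter_mem_nhdsWithin _ hV)).exists
  exact ⟨z, hzV, mem_interior_iff_mem_nhds.2 (hz (hU.mem_nhds hzU))⟩

theorem exists_tendsto_of_abs_le_of_mapClusterPt_unique {α : Type*} {l : Filter α} [l.NeBot]
    {f : α → ℝ} {C : ℝ} (hC : ∀ a, |f a| ≤ C)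
    (huniq : ∀ r s, MapClusterPt r l f → MapClusterPt s l f → r = s) :
    ∃ r, Tendsto f l (𝓝 r) := by
  have hmem : ∀ᶠ a in l, f a ∈ Icc (-C) C := Eventually.of_forall fun a => abs_le.1 (hC a)
  obtain ⟨r, -, hr⟩ := isCompact_Icc.exists_mapClusterPt (le_principal_iff.2 hmem)
  exact ⟨r, isCompact_Icc.tendsto_nhds_of_unique_mapClusterPt hmem
    fun s _ hs => huniq s r hs hr⟩

theorem hasGJD_of_mapClusterPt_of_lt {f : X → ℝ} {x : X} {r s : ℝ}
    (hr : MapClusterPt r (𝓝[{z | ContinuousAt f z}] x) f)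
    (hs : MapClusterPt s (𝓝[{z | ContinuousAt f z}] x) f) (hrs : r < s) : HasGJD f := by
  obtain ⟨a, hra, has⟩ := exists_between hrs
  obtain ⟨b, hab, hbs⟩ := exists_between has
  have closure_image_subset : ∀ t : Set ℝ, closure (f '' interior (f ⁻¹' t)) ⊆ closure t :=
    fun t => closure_mono ((image_mono interior_subset).trans (image_preimage_subset f t))
  refine ⟨x, interior (f ⁻¹' Iio a), interior (f ⁻¹' Ioi b), isOpen_interior, isOpen_interior,
    ⟨mem_closure_interior_preimage_of_mapClusterPt isOpen_Iio hra hr,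
      mem_closure_interior_preimage_of_mapClusterPt isOpen_Ioi hbs hs⟩, ?_⟩
  refine disjoint_iff_inter_eq_empty.1 (Disjoint.mono (closure_image_subset _)
    (closure_image_subset _) ?_)
  rw [closure_Iio, closure_Ioi]
  exact Iic_disjoint_Ici.2 (not_le.2 hab)

theorem mapClusterPt_unique_of_not_hasGJD {f : X → ℝ} (hf : ¬ HasGJD f) {x : X} {r s : ℝ}
    (hr : MapClusterPt r (𝓝[{z | ContinuousAt f z}] x) f)
    (hs : MapClusterPt s (𝓝[{z | ContinuousAt f z}] x) f) : r = s :=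
  le_antisymm (not_lt.1 fun h => hf (hasGJD_of_mapClusterPt_of_lt hs hr h))
    (not_lt.1 fun h => hf (hasGJD_of_mapClusterPt_of_lt hr hs h))

end

theorem regularization_exists_unique_general {X : Type*} [TopologicalSpace X] [MeasurableSpace X]
    (μ : Measure X)
    (hsupp : ∀ U : Set X, IsOpen U → U.Nonempty → 0 < μ U)
    (f : X → ℝ) (hfb : ∃ C, ∀ x, |f x| ≤ C)
    (hnull : μ {x | ¬ ContinuousAt f x} = 0)
    (hnogjd : ¬ HasGJD f) :
    ∃! fr : C(X, ℝ), ∀ x, ContinuousAt f x → fr x = f x := by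
  obtain ⟨C, hC⟩ := hfb
  have : μ.IsOpenPosMeasure := ⟨fun U hU hne => (hsupp U hU hne).ne'⟩
  have hdense : Dense {x | ContinuousAt f x} := μ.dense_of_ae (ae_iff.2 hnull)
  have hlim : ∀ x, ∃ r, Tendsto f (𝓝[{x | ContinuousAt f x}] x) (𝓝 r) := fun x =>
    have := mem_closure_iff_nhdsWithin_neBot.1 (hdense x)
    exists_tendsto_of_abs_le_of_mapClusterPt_unique hC
      fun _ _ => mapClusterPt_unique_of_not_hasGJD hnogjd
  exact existsUnique_continuousMap_eqOn_of_tendsto_nhdsWithin hdense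
    (continuousOn_of_forall_continuousAt fun _ => id) hlim

/-- Let `X` be compact Hausdorff and `μ` a finite complete regular Borel measure with full
support. If `f : X → ℝ` is `μ`-Riemann integrable (bounded with `μ`-null set of
discontinuities) and has no generalized jump discontinuity, then there is a unique continuous
`f_r : X → ℝ` that agrees with `f` at every continuity point of `f`. -/
theorem regularization_exists_unique {X : Type*} [TopologicalSpace X] [CompactSpace X]
    [T2Space X] [MeasurableSpace X] [BorelSpace X]
    (μ : Measure X) [IsFiniteMeasure μ] (hcomplete : μ.IsComplete)
    (hreg : ∀ A : Set X, MeasurableSet A → ∀ ε > (0 : ℝ),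
      ∃ F G : Set X, IsClosed F ∧ IsOpen G ∧ F ⊆ A ∧ A ⊆ G ∧ (μ (G \ F)).toReal < ε)
    (hsupp : ∀ U : Set X, IsOpen U → U.Nonempty → 0 < μ U)
    (f : X → ℝ) (hfb : ∃ C, ∀ x, |f x| ≤ C)
    (hnull : μ {x | ¬ ContinuousAt f x} = 0)
    (hnogjd : ¬ HasGJD f) :
    ∃! fr : C(X, ℝ), ∀ x, ContinuousAt f x → fr x = f x :=
  regularization_exists_unique_general μ hsupp f hfb hnull hnogjd
end

section
/- Let G be a topological group whose Bohr compactification ι_b : G → bG is injective, and let K ⊆ G be compact with G not compact. If G is covered by no finite union of sets of the form g K K⁻¹, then there exists a sequence (gᵢ) in G with the translates gᵢK pairwise disjoint, and consequently the Haar measure of ι_b(K) in bG is zero. -/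
open MeasureTheory Set Pointwise

/-- Let `G` be a topological group whose Bohr compactification `ι_b : G → bG` (a compact group
`C` with a continuous dense-range homomorphism `ι`) is injective, and let `K ⊆ G` be compact
with `G` not compact. If no finite union of sets `g • (K * K⁻¹)` covers `G`, then there is a
sequence `(gᵢ)` in `G` with the translates `gᵢ • K` pairwise disjoint, and consequently the
Haar measure of `ι(K)` in `bG` is zero. -/
theorem haar_null_of_compact_image {G C : Type*}
    [Group G] [TopologicalSpace G] [IsTopologicalGroup G]
    [Group C] [TopologicalSpace C] [IsTopologicalGroup C] [CompactSpace C] [T2Space C]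
    [MeasurableSpace C] [BorelSpace C]
    (μb : Measure C) [μb.IsHaarMeasure] [IsProbabilityMeasure μb]
    (ι : G →* C) (hι : Continuous ι) (hdense : DenseRange ι) (hinj : Function.Injective ι)
    (hG : ¬ CompactSpace G)
    (K : Set G) (hK : IsCompact K)
    (hcov : ∀ s : Finset G, (⋃ g ∈ s, g • (K * K⁻¹)) ≠ Set.univ) :
    (∃ g : ℕ → G, Pairwise fun i j => Disjoint (g i • K) (g j • K)) ∧
      μb (ι '' K) = 0 := by
  classical
  have pick : ∀ s : Finset G, ∃ x : G, x ∉ ⋃ g ∈ s, g • (K * K⁻¹) := by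
    intro s
    rcases (ne_univ_iff_exists_notMem _).mp (hcov s) with ⟨x, hx⟩
    exact ⟨x, hx⟩
  set F : ℕ → Finset G := fun n => Nat.rec ∅ (fun _ s => insert (pick s).choose s) n with hF
  set g : ℕ → G := fun n => (pick (F n)).choose with hg
  have hmem : ∀ n, g n ∈ F (n + 1) := fun n => Finset.mem_insert_self _ _
  have hmono : Monotone F := monotone_nat_of_le_succ fun n => Finset.subset_insert _ _
  have hspec : ∀ n, g n ∉ ⋃ x ∈ F n, x • (K * K⁻¹) := fun n => (pick (F n)).choose_spec
  have key : ∀ i j : ℕ, i < j → Disjoint (g i • K) (g j • K) := by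
    intro i j hij
    rw [Set.disjoint_left]
    intro x hxi hxj
    obtain ⟨k₁, hk₁, rfl⟩ := hxi
    obtain ⟨k₂, hk₂, hx⟩ := hxj
    apply hspec j
    refine Set.mem_biUnion (hmono hij (hmem i)) ?_
    refine ⟨k₁ * k₂⁻¹, Set.mul_mem_mul hk₁ (Set.inv_mem_inv.mpr hk₂), ?_⟩
    simp only [smul_eq_mul] at hx ⊢
    rw [← mul_assoc, ← hx, mul_inv_cancel_right]
  have hpair : Pairwise fun i j => Disjoint (g i • K) (g j • K) := by
    intro i j hij
    rcases hij.lt_or_gt with h | h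
    · exact key i j h
    · exact (key j i h).symm
  refine ⟨⟨g, hpair⟩, ?_⟩
  by_contra hμ
  have hLc : IsCompact (ι '' K) := hK.image hι
  have hLm : MeasurableSet (ι '' K) := hLc.measurableSet
  set S : ℕ → Set C := fun n => ι (g n) • (ι '' K) with hS
  have hSim : ∀ n, S n = ι '' (g n • K) := by
    intro n
    rw [hS]
    simp only [Set.image_smul_distrib]
  have hSd : Pairwise (Function.onFun Disjoint S) := by
    intro i j hij
    rw [Function.onFun, hSim, hSim]
    exact (Set.disjoint_image_iff hinj).mpr (hpair hij)
  have hSm : ∀ n, MeasurableSet (S n) := fun n => hLm.const_smul _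
  have hU : μb (⋃ n, S n) = ∑' n, μb (S n) := measure_iUnion hSd hSm
  have hSμ : ∀ n, μb (S n) = μb (ι '' K) := fun n => by
    rw [hS]; exact measure_smul μb (ι (g n)) (ι '' K)
  have htop : (∑' n : ℕ, μb (S n)) = ⊤ := by
    simp only [hSμ]
    exact ENNReal.tsum_const_eq_top_of_ne_zero hμ
  have : μb (⋃ n, S n) ≤ 1 := prob_le_one
  rw [hU, htop] at this
  simp at this
end

section
/- Let 𝕋 = ℝ/ℤ, let α ∈ 𝕋 be irrational, and let G be a subgroup of 𝕋 maximal with respect to not containing α. Then G is not a Haar-measurable null set in 𝕋; in fact if G were a measurable null set then 𝕋 would be a countable union of null sets, a contradiction. -/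
open MeasureTheory Pointwise

/-!
Maximality of `G` says that for every `x ∉ G` the subgroup generated by `G` and `x` contains `α`,
i.e. `k • x ∈ α +ᵥ G` for some `k ≠ 0`. Hence the whole group is covered by `G` together with the
countably many preimages of the translate `α +ᵥ G` under the maps `x ↦ k • x`, `k ≠ 0`. On a compact
divisible abelian group these maps preserve Haar measure, so if `G` were null then so would be the
whole group.
-/

namespace AddSubgroup

variable {A : Type*} [AddCommGroup A]

theorem exists_zsmul_mem_vadd_of_maximal {G : AddSubgroup A} {a : A} (ha : a ∉ G)
    (hmax : ∀ H : AddSubgroup A, G ≤ H → a ∉ H → H = G) {x : A} (hx : x ∉ G) :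
    ∃ k : ℤ, k ≠ 0 ∧ k • x ∈ a +ᵥ (G : Set A) := by
  have ha_sup : a ∈ G ⊔ zmultiples x := by
    by_contra h
    exact hx (hmax _ le_sup_left h ▸ mem_sup_right (mem_zmultiples x))
  obtain ⟨g, hg, _, ⟨k, rfl⟩, hgk⟩ := mem_sup.mp ha_sup
  refine ⟨k, ?_, -g, neg_mem hg, ?_⟩
  · rintro rfl
    exact ha (by simpa [← hgk] using hg)
  · show a + -g = k • x
    rw [← hgk]
    abel

theorem univ_subset_union_preimage_zsmul_of_maximal {G : AddSubgroup A} {a : A} (ha : a ∉ G)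
    (hmax : ∀ H : AddSubgroup A, G ≤ H → a ∉ H → H = G) :
    Set.univ ⊆ (G : Set A) ∪ ⋃ k ∈ {k : ℤ | k ≠ 0}, (k • ·) ⁻¹' (a +ᵥ (G : Set A)) := by
  intro x _
  by_cases hx : x ∈ G
  · exact Or.inl hx
  · obtain ⟨k, hk, hkx⟩ := exists_zsmul_mem_vadd_of_maximal ha hmax hx
    exact Or.inr (Set.mem_biUnion hk hkx)

variable [TopologicalSpace A] [IsTopologicalAddGroup A] [CompactSpace A] [DivisibleBy A ℤ]
  [MeasurableSpace A] [BorelSpace A]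

theorem measure_ne_zero_of_maximal (μ : Measure A) [μ.IsAddHaarMeasure] {G : AddSubgroup A}
    {a : A} (ha : a ∉ G) (hmax : ∀ H : AddSubgroup A, G ≤ H → a ∉ H → H = G) :
    μ G ≠ 0 := by
  intro hG
  have h_translate : μ (a +ᵥ (G : Set A)) = 0 := by rwa [measure_vadd]
  have h_preimages : μ (⋃ k ∈ {k : ℤ | k ≠ 0}, (k • ·) ⁻¹' (a +ᵥ (G : Set A))) = 0 :=
    (measure_biUnion_null_iff (Set.to_countable _)).mpr fun _ hk =>
      (Measure.measurePreserving_zsmul μ hk).quasiMeasurePreserving.preimage_null h_translate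
  have h_univ : μ Set.univ = 0 :=
    measure_mono_null (univ_subset_union_preimage_zsmul_of_maximal ha hmax)
      (measure_union_null hG h_preimages)
  exact NeZero.ne μ (Measure.measure_univ_eq_zero.mp h_univ)

end AddSubgroup

theorem maximal_subgroup_not_null_general
    (α : AddCircle (1 : ℝ))
    (G : AddSubgroup (AddCircle (1 : ℝ))) (hαG : α ∉ G)
    (hmax : ∀ H : AddSubgroup (AddCircle (1 : ℝ)), G ≤ H → α ∉ H → H = G) :
    ¬ (MeasurableSet (G : Set (AddCircle (1 : ℝ))) ∧
        volume (G : Set (AddCircle (1 : ℝ))) = 0) :=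
  fun h => AddSubgroup.measure_ne_zero_of_maximal volume hαG hmax h.2

/-- Let `𝕋 = ℝ/ℤ`, `α ∈ 𝕋` irrational (of infinite order), and `G ≤ 𝕋` a subgroup maximal
with respect to not containing `α`. Then `G` is not a Haar-measurable null set in `𝕋`. -/
theorem maximal_subgroup_not_null
    (α : AddCircle (1 : ℝ)) (hα : ∀ n : ℤ, n ≠ 0 → n • α ≠ 0)
    (G : AddSubgroup (AddCircle (1 : ℝ))) (hαG : α ∉ G)
    (hmax : ∀ H : AddSubgroup (AddCircle (1 : ℝ)), G ≤ H → α ∉ H → H = G) :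
    ¬ (MeasurableSet (G : Set (AddCircle (1 : ℝ))) ∧
        volume (G : Set (AddCircle (1 : ℝ))) = 0) :=
  maximal_subgroup_not_null_general α G hαG hmax
end

section
/- Let C_n = ℤ/3ⁿℤ and let f_n : ℤ → [0,1] be the 3ⁿ-periodic function f_n(k) = ∏_{j=1}^n cos²(2πk/3ʲ). Then the mean value of f_n, i.e., the average of f_n over one period, equals 1/2ⁿ: (1/3ⁿ) ∑_{k=0}^{3ⁿ−1} f_n(k) = 1/2ⁿ. -/
open Real

lemma trig3 (θ : ℝ) :
    cos (θ + 0 * (2 * π / 3)) ^ 2 + cos (θ + 1 * (2 * π / 3)) ^ 2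
      + cos (θ + 2 * (2 * π / 3)) ^ 2 = 3 / 2 := by
  have h0 : θ + (0 : ℝ) * (2 * π / 3) = θ := by ring
  have h1 : θ + (1 : ℝ) * (2 * π / 3) = θ + (π - π / 3) := by ring
  have h2 : θ + (2 : ℝ) * (2 * π / 3) = θ + (π + π / 3) := by ring
  rw [h0, h1, h2, cos_add, cos_add, cos_pi_sub, sin_pi_sub,
    cos_add π (π / 3), sin_add π (π / 3), Real.cos_pi, Real.sin_pi,
    cos_pi_div_three, sin_pi_div_three]
  have hs : sin θ ^ 2 + cos θ ^ 2 = 1 := sin_sq_add_cos_sq θ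
  have h3 : (Real.sqrt 3) ^ 2 = 3 := Real.sq_sqrt (by norm_num)
  nlinarith [hs, h3]

lemma step_term (n a m : ℕ) :
    (∏ j ∈ Finset.range (n + 1),
        (Real.cos (2 * π * ((a * 3 ^ n + m : ℕ) : ℝ) / 3 ^ (j + 1))) ^ 2)
      = (∏ j ∈ Finset.range n, (Real.cos (2 * π * (m : ℝ) / 3 ^ (j + 1))) ^ 2)
        * (Real.cos (2 * π * (m : ℝ) / 3 ^ (n + 1) + (a : ℝ) * (2 * π / 3))) ^ 2 := by
  rw [Finset.prod_range_succ]
  congr 1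
  · refine Finset.prod_congr rfl fun j hj => ?_
    rw [Finset.mem_range] at hj
    obtain ⟨d, hd⟩ := Nat.exists_eq_add_of_lt hj
    have h3 : ((3 : ℝ) ^ (j + 1)) ≠ 0 := by positivity
    have key : (2 * π * ((a * 3 ^ n + m : ℕ) : ℝ) / 3 ^ (j + 1))
        = 2 * π * (m : ℝ) / 3 ^ (j + 1) + ((a * 3 ^ d : ℤ) : ℝ) * (2 * π) := by
      subst hd
      push_cast
      field_simp
      ring
    rw [key, Real.cos_add_int_mul_two_pi]
  · congr 2
    have h3 : ((3 : ℝ) ^ (n + 1)) ≠ 0 := by positivity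
    push_cast
    field_simp
    ring

/-- The `3ⁿ`-periodic function `f_n(k) = ∏_{j=1}^n cos²(2πk/3ʲ)` has mean value `1/2ⁿ`:
its average over one period equals `1/2ⁿ`. -/
theorem mean_value_fn (n : ℕ) :
    (∑ k ∈ Finset.range (3 ^ n),
        ∏ j ∈ Finset.range n, (Real.cos (2 * π * (k : ℝ) / 3 ^ (j + 1))) ^ 2) / 3 ^ n
      = 1 / 2 ^ n := by
  induction n with
  | zero => simp
  | succ n ih =>
    have key : (∑ k ∈ Finset.range (3 ^ (n + 1)),
        ∏ j ∈ Finset.range (n + 1), (Real.cos (2 * π * (k : ℝ) / 3 ^ (j + 1))) ^ 2)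
        = (3 / 2) * ∑ k ∈ Finset.range (3 ^ n),
            ∏ j ∈ Finset.range n, (Real.cos (2 * π * (k : ℝ) / 3 ^ (j + 1))) ^ 2 := by
      have hsplit : 3 ^ (n + 1) = 3 ^ n + (3 ^ n + 3 ^ n) := by ring
      rw [hsplit, Finset.sum_range_add, Finset.sum_range_add]
      have s0 : (∑ m ∈ Finset.range (3 ^ n),
          ∏ j ∈ Finset.range (n + 1), (Real.cos (2 * π * (m : ℝ) / 3 ^ (j + 1))) ^ 2)
          = ∑ m ∈ Finset.range (3 ^ n),
            (∏ j ∈ Finset.range n, (Real.cos (2 * π * (m : ℝ) / 3 ^ (j + 1))) ^ 2)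
              * (Real.cos (2 * π * (m : ℝ) / 3 ^ (n + 1) + ((0 : ℕ) : ℝ) * (2 * π / 3))) ^ 2 := by
        refine Finset.sum_congr rfl fun m _ => ?_
        conv_lhs => rw [show m = 0 * 3 ^ n + m from by ring]
        exact step_term n 0 m
      have s1 : (∑ m ∈ Finset.range (3 ^ n),
          ∏ j ∈ Finset.range (n + 1), (Real.cos (2 * π * ((3 ^ n + m : ℕ) : ℝ) / 3 ^ (j + 1))) ^ 2)
          = ∑ m ∈ Finset.range (3 ^ n),
            (∏ j ∈ Finset.range n, (Real.cos (2 * π * (m : ℝ) / 3 ^ (j + 1))) ^ 2)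
              * (Real.cos (2 * π * (m : ℝ) / 3 ^ (n + 1) + ((1 : ℕ) : ℝ) * (2 * π / 3))) ^ 2 := by
        refine Finset.sum_congr rfl fun m _ => ?_
        conv_lhs => rw [show 3 ^ n + m = 1 * 3 ^ n + m from by ring]
        exact step_term n 1 m
      have s2 : (∑ m ∈ Finset.range (3 ^ n),
          ∏ j ∈ Finset.range (n + 1),
            (Real.cos (2 * π * ((3 ^ n + (3 ^ n + m) : ℕ) : ℝ) / 3 ^ (j + 1))) ^ 2)
          = ∑ m ∈ Finset.range (3 ^ n),
            (∏ j ∈ Finset.range n, (Real.cos (2 * π * (m : ℝ) / 3 ^ (j + 1))) ^ 2)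
              * (Real.cos (2 * π * (m : ℝ) / 3 ^ (n + 1) + ((2 : ℕ) : ℝ) * (2 * π / 3))) ^ 2 := by
        refine Finset.sum_congr rfl fun m _ => ?_
        conv_lhs => rw [show 3 ^ n + (3 ^ n + m) = 2 * 3 ^ n + m from by ring]
        exact step_term n 2 m
      rw [s0, s1, s2, ← Finset.sum_add_distrib, ← Finset.sum_add_distrib, Finset.mul_sum]
      refine Finset.sum_congr rfl fun m _ => ?_
      push_cast
      linear_combination (∏ j ∈ Finset.range n, (Real.cos (2 * π * (m : ℝ) / 3 ^ (j + 1))) ^ 2)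
        * trig3 (2 * π * (m : ℝ) / 3 ^ (n + 1))
    rw [key]
    have h2 : ((2 : ℝ) ^ n) ≠ 0 := by positivity
    have h3 : ((3 : ℝ) ^ n) ≠ 0 := by positivity
    rw [div_eq_iff h3] at ih
    rw [pow_succ, pow_succ, div_eq_iff (by positivity)]
    linear_combination (3 / 2 : ℝ) * ih
end

section
/- Let G be an uncountable abelian group. Then every countable union of cosets of countable subgroups of G is a proper subset of G; more specifically, given any enumeration (g_α) of G \ {0} by ordinals α < |G|, one can choose by transfinite recursion pairwise distinct elements x_α, y_α with y_α ∈ ⟨g_α⟩ + x_α and y_α ≠ x_α, such that the set A = {x_α} satisfies: y_α ∉ A for all α. -/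
open Set Pointwise

lemma key_step {G : Type} [AddCommGroup G] [Uncountable G] (S : Set G)
    (hS : Cardinal.mk S < Cardinal.mk G) (g0 : G) (hg0 : g0 ≠ 0) :
    ∃ x y : G, x ≠ y ∧ y - x ∈ AddSubgroup.zmultiples g0 ∧ x ∉ S ∧ y ∉ S := by
  set H := AddSubgroup.zmultiples g0 with hH
  have hHcount : Cardinal.mk H ≤ Cardinal.aleph0 := by
    have : Function.Surjective (fun n : ℤ => (⟨n • g0, AddSubgroup.zsmul_mem _ (AddSubgroup.mem_zmultiples g0) n⟩ : H)) := by
      rintro ⟨a, ha⟩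
      obtain ⟨n, hn⟩ := AddSubgroup.mem_zmultiples_iff.mp ha
      exact ⟨n, Subtype.ext hn⟩
    calc Cardinal.mk H ≤ Cardinal.mk ℤ := Cardinal.mk_le_of_surjective this
      _ = Cardinal.aleph0 := Cardinal.mk_int
  have haleph : Cardinal.aleph0 < Cardinal.mk G := Cardinal.aleph0_lt_mk
  -- there is a coset class missed by S
  let q : G → G ⧸ H := QuotientAddGroup.mk
  have hne : q '' S ≠ Set.univ := by
    intro h
    have hsurj : Function.Surjective (fun s : S => q s.1) := by
      intro c
      have : c ∈ q '' S := h ▸ Set.mem_univ c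
      obtain ⟨a, ha, rfl⟩ := this
      exact ⟨⟨a, ha⟩, rfl⟩
    have h1 : Cardinal.mk (G ⧸ H) ≤ Cardinal.mk S := Cardinal.mk_le_of_surjective hsurj
    have h2 : Cardinal.mk G = Cardinal.mk (G ⧸ H) * Cardinal.mk H := by
      have := Cardinal.mk_congr (AddSubgroup.addGroupEquivQuotientProdAddSubgroup (s := H))
      rw [this, Cardinal.mk_prod, Cardinal.lift_id, Cardinal.lift_id]
    have h3 : Cardinal.mk G < Cardinal.mk G := by
      calc Cardinal.mk G = Cardinal.mk (G ⧸ H) * Cardinal.mk H := h2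
        _ ≤ Cardinal.mk S * Cardinal.aleph0 := mul_le_mul' h1 hHcount
        _ < Cardinal.mk G := Cardinal.mul_lt_of_lt haleph.le hS haleph
    exact absurd h3 (lt_irrefl _)
  obtain ⟨c, hc⟩ : ∃ c : G ⧸ H, c ∉ q '' S := by
    by_contra h
    push_neg at h
    exact hne (Set.eq_univ_of_forall h)
  obtain ⟨x, rfl⟩ : ∃ x, q x = c := Quotient.exists_rep c
  refine ⟨x, x + g0, ?_, ?_, ?_, ?_⟩
  · intro h
    exact hg0 (by linear_combination (norm := abel_nf) h.symm)
  · have : x + g0 - x = g0 := by abel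
    rw [this]
    exact AddSubgroup.mem_zmultiples g0
  · exact fun hx => hc ⟨x, hx, rfl⟩
  · intro hy
    apply hc
    refine ⟨x + g0, hy, ?_⟩
    refine QuotientAddGroup.eq.mpr ?_
    simpa using AddSubgroup.neg_mem H (AddSubgroup.mem_zmultiples g0)

/-- Let `G` be an uncountable abelian group. Then every countable union of cosets of countable
subgroups of `G` is a proper subset of `G`; more specifically, given any enumeration `(g_α)` of
`G \ {0}` by ordinals `α < |G|` (a well-ordered index `I` whose initial segments have
cardinality `< |G|`), one can choose pairwise distinct elements `x_α, y_α` with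
`y_α ∈ ⟨g_α⟩ + x_α` and `y_α ≠ x_α` such that `A = {x_α}` satisfies `y_α ∉ A` for all `α`. -/
theorem uncountable_coset_construction {G : Type} [AddCommGroup G] [Uncountable G]
    (I : Type) [LinearOrder I] [WellFoundedLT I]
    (hseg : ∀ i : I, Cardinal.mk {j : I // j < i} < Cardinal.mk G)
    (g : I → G) (hg0 : ∀ i, g i ≠ 0) (hginj : Function.Injective g)
    (hgsurj : ∀ a : G, a ≠ 0 → ∃ i, g i = a) :
    (∀ (ι : Type) (_ : Countable ι) (H : ι → AddSubgroup G) (c : ι → G),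
        (∀ i, ((H i : Set G)).Countable) → (⋃ i, c i +ᵥ (H i : Set G)) ≠ Set.univ) ∧
    ∃ x y : I → G,
      (∀ i, y i - x i ∈ AddSubgroup.zmultiples (g i)) ∧
      (∀ i, y i ≠ x i) ∧
      Function.Injective x ∧ Function.Injective y ∧
      (∀ i j, x i ≠ y j) ∧
      (∀ i, y i ∉ Set.range x) := by
  constructor
  · intro ι _ H c hcount h
    have huniv : (Set.univ : Set G).Countable := by
      rw [← h]
      refine Set.countable_iUnion fun i => ?_
      have := (hcount i).image (fun a => c i + a)
      simpa [← Set.image_vadd, vadd_eq_add] using this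
    exact Set.not_countable_univ huniv
  · have haleph : Cardinal.aleph0 < Cardinal.mk G := Cardinal.aleph0_lt_mk
    have hcard : ∀ (i : I) (f : ∀ j : I, j < i → G × G),
        Cardinal.mk (((Set.range fun j : {j // j < i} => (f j j.2).1) ∪
          (Set.range fun j : {j // j < i} => (f j j.2).2) : Set G)) < Cardinal.mk G := by
      intro i f
      calc Cardinal.mk (((Set.range fun j : {j // j < i} => (f j j.2).1) ∪
            (Set.range fun j : {j // j < i} => (f j j.2).2) : Set G))
          ≤ Cardinal.mk (Set.range fun j : {j // j < i} => (f j j.2).1) +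
            Cardinal.mk (Set.range fun j : {j // j < i} => (f j j.2).2) :=
            Cardinal.mk_union_le _ _
        _ ≤ Cardinal.mk {j : I // j < i} + Cardinal.mk {j : I // j < i} :=
            add_le_add Cardinal.mk_range_le Cardinal.mk_range_le
        _ < Cardinal.mk G := Cardinal.add_lt_of_lt haleph.le (hseg i) (hseg i)
    choose X Y hne hmem hX hY using fun (i : I) (f : ∀ j : I, j < i → G × G) =>
      key_step _ (hcard i f) (g i) (hg0 i)
    let F : ∀ i : I, (∀ j, j < i → G × G) → G × G := fun i f => (X i f, Y i f)
    let p : I → G × G := fun i => (wellFounded_lt (α := I)).fix F i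
    have hp : ∀ i, p i = F i (fun j _ => p j) := fun i => WellFounded.fix_eq _ F i
    let S : I → Set G := fun i => (Set.range fun j : {j // j < i} => (p j).1) ∪
      (Set.range fun j : {j // j < i} => (p j).2)
    have hmem1 : ∀ {j i : I}, j < i → (p j).1 ∈ S i :=
      fun {j i} hj => Set.mem_union_left _ ⟨⟨j, hj⟩, rfl⟩
    have hmem2 : ∀ {j i : I}, j < i → (p j).2 ∈ S i :=
      fun {j i} hj => Set.mem_union_right _ ⟨⟨j, hj⟩, rfl⟩
    have key : ∀ i, (p i).1 ≠ (p i).2 ∧ (p i).2 - (p i).1 ∈ AddSubgroup.zmultiples (g i) ∧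
        (p i).1 ∉ S i ∧ (p i).2 ∉ S i := by
      intro i
      rw [hp i]
      exact ⟨hne i (fun j _ => p j), hmem i (fun j _ => p j),
        hX i (fun j _ => p j), hY i (fun j _ => p j)⟩
    refine ⟨fun i => (p i).1, fun i => (p i).2, fun i => (key i).2.1,
      fun i => ((key i).1).symm, ?_, ?_, ?_, ?_⟩
    · intro i j h
      replace h : (p i).1 = (p j).1 := h
      by_contra hne'
      rcases lt_or_gt_of_ne hne' with hlt | hlt
      · exact (key j).2.2.1 (h ▸ hmem1 hlt)
      · exact (key i).2.2.1 (h.symm ▸ hmem1 hlt)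
    · intro i j h
      replace h : (p i).2 = (p j).2 := h
      by_contra hne'
      rcases lt_or_gt_of_ne hne' with hlt | hlt
      · exact (key j).2.2.2 (h ▸ hmem2 hlt)
      · exact (key i).2.2.2 (h.symm ▸ hmem2 hlt)
    · intro i j h
      replace h : (p i).1 = (p j).2 := h
      rcases lt_trichotomy i j with hlt | rfl | hlt
      · exact (key j).2.2.2 (h ▸ hmem1 hlt)
      · exact (key i).1 h
      · exact (key i).2.2.1 (h ▸ hmem2 hlt)
    · rintro i ⟨j, hj⟩
      replace hj : (p j).1 = (p i).2 := hj
      rcases lt_trichotomy i j with hlt | rfl | hlt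
      · exact (key j).2.2.1 (hj ▸ hmem2 hlt)
      · exact (key i).1 hj
      · exact (key i).2.2.2 (hj ▸ hmem1 hlt)
end
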